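/- arXiv:1607.07182 — 14 statements merged into one kernel-verified Lean document; each statement's English description precedes it below -/
import Mathlib

section
/- Fix x in (l,r) and define s(y) = ∫_c^y s'(u) du, M(y) = ∫_c^y m(u) du, and analogously ŝ(y) = ∫_c^y ŝ'(u) du, M̂(y) = ∫_c^y m̂(u) du. Define the (possibly infinite) boundary quantities N(l) = ∫_{(l,x]} (s(x)-s(y)) m(y) dy and Σ(l) = ∫_{(l,x]} (M(x)-M(y)) s'(y) dy, and N̂(l), Σ̂(l) by the same formulas with ŝ, m̂ in place of s, m. Then N̂(l) = Σ(l) and Σ̂(l) = N(l). Consequently, in Feller's boundary classification: l is an entrance boundary for (a,b) (i.e. N(l) < ∞ and Σ(l) = ∞) if and only if l is an exit boundary for (a, a'-b) (i.e. N̂(l) = ∞ and Σ̂(l) < ∞); l is natural for (a,b) (both quantities infinite) if and only if it is natural for (a, a'-b); and l is regular for (a,b) (both quantities finite) if and only if it is regular for (a, a'-b). -/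
/-!
Since `(log a)' = a'/a`, the conjugate scale density is
`ŝ'(y) = exp (-∫_c^y (a' - b)/a) = a(c) / (a(y) s'(y)) = a(c) m(y)`, hence `m̂ = s'/a(c)`, and
integrating, `Ŝ = a(c) M` and `M̂ = S/a(c)`. Conjugation thus swaps scale and speed up to the
constant `a(c)`, which cancels in the products defining `N̂` and `Σ̂`; so `N̂ = Σ`, `Σ̂ = N`, and the
three classification equivalences are reorderings of conjunctions.
-/

open MeasureTheory Set
open scoped ENNReal

theorem ordConnected_preimage_coe_Ioo_ereal (l r : EReal) :
    (Real.toEReal ⁻¹' Ioo l r).OrdConnected :=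
  ordConnected_Ioo.preimage_mono EReal.coe_strictMono.monotone

section LogDerivative

variable {a a' b : ℝ → ℝ} {c y : ℝ}

theorem integral_div_eq_log_sub_log (ha : ∀ t ∈ uIcc c y, HasDerivAt a (a' t) t)
    (ha' : ContinuousOn a' (uIcc c y)) (ha₀ : ∀ t ∈ uIcc c y, a t ≠ 0) :
    ∫ t in c..y, a' t / a t = Real.log (a y) - Real.log (a c) := by
  have ha_cont : ContinuousOn a (uIcc c y) := fun t ht => (ha t ht).continuousAt.continuousWithinAt
  exact intervalIntegral.integral_eq_sub_of_hasDerivAt (fun t ht => (ha t ht).log (ha₀ t ht))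
    (ha'.div ha_cont ha₀).intervalIntegrable

theorem exp_neg_integral_sub_div_eq (ha : ∀ t ∈ uIcc c y, HasDerivAt a (a' t) t)
    (ha' : ContinuousOn a' (uIcc c y)) (hb : ContinuousOn b (uIcc c y))
    (hapos : ∀ t ∈ uIcc c y, 0 < a t) :
    Real.exp (-∫ t in c..y, (a' t - b t) / a t)
      = a c / (Real.exp (-∫ t in c..y, b t / a t) * a y) := by
  have ha₀ : ∀ t ∈ uIcc c y, a t ≠ 0 := fun t ht => (hapos t ht).ne'
  have ha_cont : ContinuousOn a (uIcc c y) := fun t ht => (ha t ht).continuousAt.continuousWithinAt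
  have hsplit : ∫ t in c..y, (a' t - b t) / a t
      = Real.log (a y) - Real.log (a c) - ∫ t in c..y, b t / a t := by
    simp only [sub_div]
    rw [intervalIntegral.integral_sub (f := fun t => a' t / a t) (g := fun t => b t / a t)
      (ha'.div ha_cont ha₀).intervalIntegrable
      (hb.div ha_cont ha₀).intervalIntegrable, integral_div_eq_log_sub_log ha ha' ha₀]
  rw [hsplit, neg_sub, sub_sub_eq_add_sub, Real.exp_sub, Real.exp_add, Real.exp_log
    (hapos c left_mem_uIcc), Real.exp_log (hapos y right_mem_uIcc), Real.exp_neg]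
  field_simp

end LogDerivative

theorem intervalIntegral_eq_const_mul_of_eqOn {I : Set ℝ} (hI : I.OrdConnected) {c : ℝ}
    (hc : c ∈ I) {f g : ℝ → ℝ} {k : ℝ} (h : ∀ y ∈ I, f y = k * g y) {y : ℝ} (hy : y ∈ I) :
    ∫ u in c..y, f u = k * ∫ u in c..y, g u := by
  rw [← intervalIntegral.integral_const_mul]
  exact intervalIntegral.integral_congr fun t ht => h t (hI.uIcc_subset hc hy ht)

theorem setLIntegral_ofReal_sub_mul_eq_of_const_mul {A : Set ℝ} (hA : MeasurableSet A)
    {x k : ℝ} (hk : k ≠ 0) {F G f g : ℝ → ℝ} (hFx : F x = k * G x)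
    (hF : ∀ y ∈ A, F y = k * G y) (hf : ∀ y ∈ A, f y = k⁻¹ * g y) :
    ∫⁻ y in A, ENNReal.ofReal ((F x - F y) * f y)
      = ∫⁻ y in A, ENNReal.ofReal ((G x - G y) * g y) := by
  refine setLIntegral_congr_fun hA fun y hy => ?_
  rw [hFx, hF y hy, hf y hy]
  field_simp

theorem conjugate_boundary_classification_general
    (l r : EReal)
    (I : Set ℝ) (hI : I = {x : ℝ | l < (x : EReal) ∧ (x : EReal) < r})
    (a a' b : ℝ → ℝ) (c : ℝ) (hc : c ∈ I)
    (ha : ∀ x ∈ I, HasDerivAt a (a' x) x)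
    (ha' : ContinuousOn a' I)
    (hb : ContinuousOn b I)
    (hapos : ∀ x ∈ I, 0 < a x)
    (s' m shat' mhat : ℝ → ℝ)
    (hs' : ∀ x : ℝ, s' x = Real.exp (-(∫ y in c..x, b y / a y)))
    (hm : ∀ x : ℝ, m x = 1 / (s' x * a x))
    (hshat' : ∀ x : ℝ, shat' x = Real.exp (-(∫ y in c..x, (a' y - b y) / a y)))
    (hmhat : ∀ x : ℝ, mhat x = 1 / (shat' x * a x))
    (S M Shat Mhat : ℝ → ℝ)
    (hS : ∀ y : ℝ, S y = ∫ u in c..y, s' u)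
    (hM : ∀ y : ℝ, M y = ∫ u in c..y, m u)
    (hShat : ∀ y : ℝ, Shat y = ∫ u in c..y, shat' u)
    (hMhat : ∀ y : ℝ, Mhat y = ∫ u in c..y, mhat u)
    (x : ℝ) (hx : x ∈ I)
    (N Sig Nhat Sighat : ℝ≥0∞)
    (hN : N = ∫⁻ y in {y : ℝ | l < (y : EReal) ∧ y ≤ x},
        ENNReal.ofReal ((S x - S y) * m y))
    (hSig : Sig = ∫⁻ y in {y : ℝ | l < (y : EReal) ∧ y ≤ x},
        ENNReal.ofReal ((M x - M y) * s' y))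
    (hNhat : Nhat = ∫⁻ y in {y : ℝ | l < (y : EReal) ∧ y ≤ x},
        ENNReal.ofReal ((Shat x - Shat y) * mhat y))
    (hSighat : Sighat = ∫⁻ y in {y : ℝ | l < (y : EReal) ∧ y ≤ x},
        ENNReal.ofReal ((Mhat x - Mhat y) * shat' y)) :
    Nhat = Sig ∧ Sighat = N ∧
    ((N < ⊤ ∧ Sig = ⊤) ↔ (Nhat = ⊤ ∧ Sighat < ⊤)) ∧
    ((N = ⊤ ∧ Sig = ⊤) ↔ (Nhat = ⊤ ∧ Sighat = ⊤)) ∧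
    ((N < ⊤ ∧ Sig < ⊤) ↔ (Nhat < ⊤ ∧ Sighat < ⊤)) := by
  have hIc : I.OrdConnected := hI ▸ ordConnected_preimage_coe_Ioo_ereal l r
  have hsub : ∀ y ∈ I, uIcc c y ⊆ I := fun y hy => hIc.uIcc_subset hc hy
  have hk : a c ≠ 0 := (hapos c hc).ne'
  have hshat : ∀ y ∈ I, shat' y = a c * m y := fun y hy => by
    rw [hshat', hm, hs', mul_one_div, exp_neg_integral_sub_div_eq
      (fun t ht => ha t (hsub y hy ht)) (ha'.mono (hsub y hy)) (hb.mono (hsub y hy))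
      (fun t ht => hapos t (hsub y hy ht))]
  have hmhat : ∀ y ∈ I, mhat y = (a c)⁻¹ * s' y := fun y hy => by
    have hs'_ne : s' y ≠ 0 := hs' y ▸ Real.exp_ne_zero _
    have hay : a y ≠ 0 := (hapos y hy).ne'
    rw [hmhat, hshat y hy, hm]
    field_simp
  have hShat_eq : ∀ y ∈ I, Shat y = a c * M y := fun y hy => by
    rw [hShat, hM, intervalIntegral_eq_const_mul_of_eqOn hIc hc hshat hy]
  have hMhat_eq : ∀ y ∈ I, Mhat y = (a c)⁻¹ * S y := fun y hy => by
    rw [hMhat, hS, intervalIntegral_eq_const_mul_of_eqOn hIc hc hmhat hy]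
  set A := {y : ℝ | l < (y : EReal) ∧ y ≤ x}
  have hA : MeasurableSet A := (measurable_coe_real_ereal measurableSet_Ioi).inter measurableSet_Iic
  have hAI : A ⊆ I := fun y hy => by
    rw [hI] at hx ⊢
    exact ⟨hy.1, (EReal.coe_le_coe_iff.mpr hy.2).trans_lt hx.2⟩
  have hNhat_eq : Nhat = Sig := hNhat ▸ hSig ▸ setLIntegral_ofReal_sub_mul_eq_of_const_mul hA hk
    (hShat_eq x hx) (fun y hy => hShat_eq y (hAI hy)) (fun y hy => hmhat y (hAI hy))
  have hSighat_eq : Sighat = N := hSighat ▸ hN ▸ setLIntegral_ofReal_sub_mul_eq_of_const_mul hA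
    (inv_ne_zero hk) (hMhat_eq x hx) (fun y hy => hMhat_eq y (hAI hy))
    (fun y hy => (inv_inv (a c)).symm ▸ hshat y (hAI hy))
  subst hNhat_eq hSighat_eq
  exact ⟨rfl, rfl, and_comm, and_comm, and_comm⟩

/-- Feller boundary quantities at `l` satisfy `N̂(l) = Σ(l)` and `Σ̂(l) = N(l)`; consequently,
`l` is entrance for `(a,b)` iff it is exit for the conjugate `(a, a'-b)`, natural iff natural,
and regular iff regular. -/
theorem conjugate_boundary_classification
    (l r : EReal) (hlr : l < r)
    (I : Set ℝ) (hI : I = {x : ℝ | l < (x : EReal) ∧ (x : EReal) < r})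
    (a a' b : ℝ → ℝ) (c : ℝ) (hc : c ∈ I)
    (ha : ∀ x ∈ I, HasDerivAt a (a' x) x)
    (ha' : ContinuousOn a' I)
    (hb : ContinuousOn b I)
    (hapos : ∀ x ∈ I, 0 < a x)
    (s' m shat' mhat : ℝ → ℝ)
    (hs' : ∀ x : ℝ, s' x = Real.exp (-(∫ y in c..x, b y / a y)))
    (hm : ∀ x : ℝ, m x = 1 / (s' x * a x))
    (hshat' : ∀ x : ℝ, shat' x = Real.exp (-(∫ y in c..x, (a' y - b y) / a y)))
    (hmhat : ∀ x : ℝ, mhat x = 1 / (shat' x * a x))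
    (S M Shat Mhat : ℝ → ℝ)
    (hS : ∀ y : ℝ, S y = ∫ u in c..y, s' u)
    (hM : ∀ y : ℝ, M y = ∫ u in c..y, m u)
    (hShat : ∀ y : ℝ, Shat y = ∫ u in c..y, shat' u)
    (hMhat : ∀ y : ℝ, Mhat y = ∫ u in c..y, mhat u)
    (x : ℝ) (hx : x ∈ I)
    (N Sig Nhat Sighat : ℝ≥0∞)
    (hN : N = ∫⁻ y in {y : ℝ | l < (y : EReal) ∧ y ≤ x},
        ENNReal.ofReal ((S x - S y) * m y))
    (hSig : Sig = ∫⁻ y in {y : ℝ | l < (y : EReal) ∧ y ≤ x},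
        ENNReal.ofReal ((M x - M y) * s' y))
    (hNhat : Nhat = ∫⁻ y in {y : ℝ | l < (y : EReal) ∧ y ≤ x},
        ENNReal.ofReal ((Shat x - Shat y) * mhat y))
    (hSighat : Sighat = ∫⁻ y in {y : ℝ | l < (y : EReal) ∧ y ≤ x},
        ENNReal.ofReal ((Mhat x - Mhat y) * shat' y)) :
    Nhat = Sig ∧ Sighat = N ∧
    ((N < ⊤ ∧ Sig = ⊤) ↔ (Nhat = ⊤ ∧ Sighat < ⊤)) ∧
    ((N = ⊤ ∧ Sig = ⊤) ↔ (Nhat = ⊤ ∧ Sighat = ⊤)) ∧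
    ((N < ⊤ ∧ Sig < ⊤) ↔ (Nhat < ⊤ ∧ Sighat < ⊤)) :=
  conjugate_boundary_classification_general l r I hI a a' b c hc ha ha' hb hapos s' m shat' mhat hs'
    hm hshat' hmhat S M Shat Mhat hS hM hShat hMhat x hx N Sig Nhat Sighat hN hSig hNhat hSighat
end

section
/- Let λ ∈ ℝ and let φ : (l,r) → ℝ be twice differentiable with a(x)φ''(x) + b(x)φ'(x) = -λφ(x) for all x in (l,r). Then ψ := φ'/s' is twice differentiable on (l,r) and satisfies a(x)ψ''(x) + (a'(x) - b(x))ψ'(x) = -λψ(x) for all x in (l,r). (In the paper's notation: if Lφ = -λφ then L̂(D_{m̂}φ) = -λ D_{m̂}φ, i.e. D_s maps eigenfunctions of the generator L to eigenfunctions of the conjugate generator L̂ with the same eigenvalue.) -/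
open Set Filter Topology

/-! Writing `ψ = φ'/s'` and using `s'' = -(b/a) s'`, the quotient rule gives
`ψ' = (a φ'' + b φ')/(a s') = -λ φ/(a s')`. Since `(a s')' = (a' - b) s'`, differentiating this
once more turns `a ψ'' + (a' - b) ψ'` into `-λ φ'/s' = -λ ψ`. -/

lemma isOpen_preimage_coe_ereal_Ioo (l r : EReal) :
    IsOpen {x : ℝ | l < (x : EReal) ∧ (x : EReal) < r} :=
  isOpen_Ioo.preimage continuous_coe_real_ereal

lemma ordConnected_preimage_coe_ereal_Ioo (l r : EReal) :
    OrdConnected {x : ℝ | l < (x : EReal) ∧ (x : EReal) < r} :=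
  ordConnected_Ioo.preimage_mono EReal.coe_strictMono.monotone

lemma hasDerivAt_exp_neg_integral {I : Set ℝ} (hIo : IsOpen I) (hIc : OrdConnected I)
    {g : ℝ → ℝ} (hg : ContinuousOn g I) {c x : ℝ} (hc : c ∈ I) (hx : x ∈ I) :
    HasDerivAt (fun t => Real.exp (-∫ y in c..t, g y))
      (-g x * Real.exp (-∫ y in c..x, g y)) x := by
  have hint : HasDerivAt (fun t => ∫ y in c..t, g y) (g x) x :=
    intervalIntegral.integral_hasDerivAt_right
      ((hg.mono (hIc.uIcc_subset hc hx)).intervalIntegrable)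
      (hg.stronglyMeasurableAtFilter hIo x hx) (hg.continuousAt (hIo.mem_nhds hx))
  simpa only [Pi.neg_apply, mul_comm] using hint.neg.exp

section ScaleDensity

variable {a b s : ℝ → ℝ} {x : ℝ}

lemma HasDerivAt.div_scaleDensity {f : ℝ → ℝ} {f' : ℝ} (hf : HasDerivAt f f' x)
    (hs : HasDerivAt s (-(b x / a x) * s x) x) (ha : a x ≠ 0) (hs0 : s x ≠ 0) :
    HasDerivAt (fun y => f y / s y) ((a x * f' + b x * f x) / (a x * s x)) x := by
  refine (hf.fun_div hs hs0).congr_deriv ?_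
  field_simp
  ring

lemma HasDerivAt.mul_scaleDensity {a'x : ℝ} (ha : HasDerivAt a a'x x)
    (hs : HasDerivAt s (-(b x / a x) * s x) x) (ha0 : a x ≠ 0) :
    HasDerivAt (fun y => a y * s y) ((a'x - b x) * s x) x := by
  refine (ha.fun_mul hs).congr_deriv ?_
  field_simp
  ring

end ScaleDensity

theorem Ds_maps_eigenfunctions_to_conjugate_eigenfunctions_general
    (l r : EReal)
    (I : Set ℝ) (hI : I = {x : ℝ | l < (x : EReal) ∧ (x : EReal) < r})
    (a a' b : ℝ → ℝ) (c : ℝ) (hc : c ∈ I)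
    (ha : ∀ x ∈ I, HasDerivAt a (a' x) x)
    (hb : ContinuousOn b I)
    (hapos : ∀ x ∈ I, 0 < a x)
    (s' : ℝ → ℝ)
    (hs' : ∀ x : ℝ, s' x = Real.exp (-(∫ y in c..x, b y / a y)))
    (lam : ℝ) (φ : ℝ → ℝ)
    (hφ1 : ∀ x ∈ I, DifferentiableAt ℝ φ x)
    (hφ2 : ∀ x ∈ I, DifferentiableAt ℝ (deriv φ) x)
    (hode : ∀ x ∈ I,
      a x * deriv (deriv φ) x + b x * deriv φ x = -lam * φ x) :
    ∀ x ∈ I,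
      DifferentiableAt ℝ (fun y => deriv φ y / s' y) x ∧
      DifferentiableAt ℝ (deriv (fun y => deriv φ y / s' y)) x ∧
      a x * deriv (deriv (fun y => deriv φ y / s' y)) x
        + (a' x - b x) * deriv (fun y => deriv φ y / s' y) x
        = -lam * (deriv φ x / s' x) := by
  have hIo : IsOpen I := hI ▸ isOpen_preimage_coe_ereal_Ioo l r
  have ha0 : ∀ x ∈ I, a x ≠ 0 := fun x hx => (hapos x hx).ne'
  have hs0 : ∀ x, s' x ≠ 0 := fun x => hs' x ▸ (Real.exp_pos _).ne'
  have hs : ∀ x ∈ I, HasDerivAt s' (-(b x / a x) * s' x) x := fun x hx => by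
    rw [funext hs']
    exact hasDerivAt_exp_neg_integral hIo (hI ▸ ordConnected_preimage_coe_ereal_Ioo l r)
      (hb.div (fun y hy => (ha y hy).continuousAt.continuousWithinAt) ha0) hc hx
  have hψ : ∀ x ∈ I, HasDerivAt (fun y => deriv φ y / s' y) (-lam * φ x / (a x * s' x)) x :=
    fun x hx => hode x hx ▸ (hφ2 x hx).hasDerivAt.div_scaleDensity (hs x hx) (ha0 x hx) (hs0 x)
  intro x hx
  have hψ'_eq : deriv (fun y => deriv φ y / s' y) =ᶠ[𝓝 x]
      fun y => -lam * φ y / (a y * s' y) :=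
    eventually_of_mem (hIo.mem_nhds hx) fun y hy => (hψ y hy).deriv
  have hψ' : HasDerivAt (deriv fun y => deriv φ y / s' y) _ x :=
    (((hφ1 x hx).hasDerivAt.const_mul (-lam)).fun_div
      ((ha x hx).mul_scaleDensity (hs x hx) (ha0 x hx)) (mul_ne_zero (ha0 x hx) (hs0 x))
      ).congr_of_eventuallyEq hψ'_eq
  refine ⟨(hψ x hx).differentiableAt, hψ'.differentiableAt, ?_⟩
  rw [hψ'.deriv, (hψ x hx).deriv]
  have hax := ha0 x hx
  have hsx := hs0 x
  field_simp
  ring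

/-- `D_s = D_{m̂}` maps eigenfunctions of `L = a d²/dx² + b d/dx` to eigenfunctions of the
conjugate generator `L̂ = a d²/dx² + (a'-b) d/dx` with the same eigenvalue: if
`a φ'' + b φ' = -λ φ` on `(l,r)`, then `ψ = φ'/s'` is twice differentiable on `(l,r)` and
`a ψ'' + (a'-b) ψ' = -λ ψ` there. -/
theorem Ds_maps_eigenfunctions_to_conjugate_eigenfunctions
    (l r : EReal) (hlr : l < r)
    (I : Set ℝ) (hI : I = {x : ℝ | l < (x : EReal) ∧ (x : EReal) < r})
    (a a' b : ℝ → ℝ) (c : ℝ) (hc : c ∈ I)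
    (ha : ∀ x ∈ I, HasDerivAt a (a' x) x)
    (ha' : ContinuousOn a' I)
    (hb : ContinuousOn b I)
    (hapos : ∀ x ∈ I, 0 < a x)
    (s' : ℝ → ℝ)
    (hs' : ∀ x : ℝ, s' x = Real.exp (-(∫ y in c..x, b y / a y)))
    (lam : ℝ) (φ : ℝ → ℝ)
    (hφ1 : ∀ x ∈ I, DifferentiableAt ℝ φ x)
    (hφ2 : ∀ x ∈ I, DifferentiableAt ℝ (deriv φ) x)
    (hode : ∀ x ∈ I,
      a x * deriv (deriv φ) x + b x * deriv φ x = -lam * φ x) :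
    ∀ x ∈ I,
      DifferentiableAt ℝ (fun y => deriv φ y / s' y) x ∧
      DifferentiableAt ℝ (deriv (fun y => deriv φ y / s' y)) x ∧
      a x * deriv (deriv (fun y => deriv φ y / s' y)) x
        + (a' x - b x) * deriv (fun y => deriv φ y / s' y) x
        = -lam * (deriv φ x / s' x) :=
  Ds_maps_eigenfunctions_to_conjugate_eigenfunctions_general l r I hI a a' b c hc ha hb hapos s' hs'
    lam φ hφ1 hφ2 hode
end

section
/- Assume in addition that b is differentiable on (l,r). Then for every function f twice differentiable at x ∈ (l,r), s'(x)·[ a(x)(f/s')''(x) + (a'(x)-b(x))(f/s')'(x) ] = a(x)f''(x) + (a'(x)+b(x))f'(x) + b'(x)f(x). In other words, the Doob h-transform of the conjugate generator L̂ = a d²/dx² + (a'-b) d/dx by the function 1/s' equals a d²/dx² + (a'+b) d/dx plus the zeroth-order term b'; in particular, if b' is constant then 1/s' (the reciprocal of the conjugate speed density, up to a constant) is an eigenfunction of L̂ with eigenvalue b'. -/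
open MeasureTheory

/-- The Doob h-transform of the conjugate generator `L̂ = a d²/dx² + (a'-b) d/dx` by the
function `1/s'` equals `a d²/dx² + (a'+b) d/dx` plus the zeroth-order term `b'`: for `f`
twice differentiable at `x ∈ (l,r)`,
`s'(x)·[a(x)(f/s')''(x) + (a'(x)-b(x))(f/s')'(x)] = a(x)f''(x) + (a'(x)+b(x))f'(x) + b'(x)f(x)`. -/
theorem htransform_of_conjugate_by_inverse_scale_density
    (l r : EReal) (hlr : l < r)
    (I : Set ℝ) (hI : I = {x : ℝ | l < (x : EReal) ∧ (x : EReal) < r})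
    (a a' b b' : ℝ → ℝ) (c : ℝ) (hc : c ∈ I)
    (ha : ∀ x ∈ I, HasDerivAt a (a' x) x)
    (ha' : ContinuousOn a' I)
    (hb : ContinuousOn b I)
    (hb' : ∀ x ∈ I, HasDerivAt b (b' x) x)
    (hapos : ∀ x ∈ I, 0 < a x)
    (s' : ℝ → ℝ)
    (hs' : ∀ x : ℝ, s' x = Real.exp (-(∫ y in c..x, b y / a y)))
    (f : ℝ → ℝ) (x : ℝ) (hx : x ∈ I)
    (hf1 : ∀ᶠ y in nhds x, DifferentiableAt ℝ f y)
    (hf2 : DifferentiableAt ℝ (deriv f) x) :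
    s' x * (a x * deriv (deriv (fun y => f y / s' y)) x
        + (a' x - b x) * deriv (fun y => f y / s' y) x)
      = a x * deriv (deriv f) x + (a' x + b x) * deriv f x + b' x * f x := by
  -- notation
  set g : ℝ → ℝ := fun y => b y / a y with hgdef
  set F : ℝ → ℝ := fun t => ∫ u in c..t, g u with hFdef
  set h : ℝ → ℝ := fun y => Real.exp (F y) with hhdef
  -- I is open
  have hIopen : IsOpen I := by
    rw [hI]
    have : {x : ℝ | l < (x : EReal) ∧ (x : EReal) < r} =
        ((↑) : ℝ → EReal) ⁻¹' (Set.Ioi l ∩ Set.Iio r) := rfl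
    rw [this]
    exact (IsOpen.inter isOpen_Ioi isOpen_Iio).preimage continuous_coe_real_ereal
  have hIord : Set.OrdConnected I := by
    rw [hI]
    constructor
    intro p hp q hq z hz
    constructor
    · exact lt_of_lt_of_le hp.1 (EReal.coe_le_coe_iff.2 hz.1)
    · exact lt_of_le_of_lt (EReal.coe_le_coe_iff.2 hz.2) hq.2
  have hane : ∀ y ∈ I, a y ≠ 0 := fun y hy => (hapos y hy).ne'
  have haC : ContinuousOn a I := fun y hy => (ha y hy).continuousAt.continuousWithinAt
  have hgC : ContinuousOn g I := hb.div haC hane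
  -- derivative of F
  have hF : ∀ y ∈ I, HasDerivAt F (g y) y := by
    intro y hy
    apply intervalIntegral.integral_hasDerivAt_right
    · exact (hgC.mono (hIord.uIcc_subset hc hy)).intervalIntegrable
    · exact hgC.stronglyMeasurableAtFilter hIopen y hy
    · exact (hgC y hy).continuousAt (hIopen.mem_nhds hy)
  have hh : ∀ y ∈ I, HasDerivAt h (g y * h y) y := by
    intro y hy
    have := (hF y hy).exp
    simpa [hhdef, mul_comm] using this
  -- f / s' = f * h
  have hfs : (fun y => f y / s' y) = fun y => f y * h y := by
    funext y
    rw [hs', hhdef]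
    simp [Real.exp_neg, div_eq_mul_inv, hFdef]
  rw [hfs]
  -- first derivative eventually
  have hev : ∀ᶠ y in nhds x,
      deriv (fun y => f y * h y) y = deriv f y * h y + f y * (g y * h y) := by
    filter_upwards [hf1, hIopen.mem_nhds hx] with y hfy hy
    exact ((hfy.hasDerivAt).mul (hh y hy)).deriv
  -- derivative of g at x
  have hga : HasDerivAt g ((b' x * a x - b x * a' x) / (a x) ^ 2) x :=
    (hb' x hx).div (ha x hx) (hane x hx)
  -- derivative of h at x twice-level pieces
  have hhx : HasDerivAt h (g x * h x) x := hh x hx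
  have hfx : DifferentiableAt ℝ f x := hf1.self_of_nhds
  have hD2 : deriv (deriv (fun y => f y * h y)) x
      = deriv (deriv f) x * h x + deriv f x * (g x * h x)
        + (deriv f x * (g x * h x)
          + f x * ((b' x * a x - b x * a' x) / (a x) ^ 2 * h x + g x * (g x * h x))) := by
    rw [Filter.EventuallyEq.deriv_eq hev]
    have h1 : HasDerivAt (fun y => deriv f y * h y)
        (deriv (deriv f) x * h x + deriv f x * (g x * h x)) x :=
      (hf2.hasDerivAt).mul hhx
    have h2 : HasDerivAt (fun y => g y * h y)
        ((b' x * a x - b x * a' x) / (a x) ^ 2 * h x + g x * (g x * h x)) x :=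
      hga.mul hhx
    have h3 : HasDerivAt (fun y => f y * (g y * h y))
        (deriv f x * (g x * h x)
          + f x * ((b' x * a x - b x * a' x) / (a x) ^ 2 * h x + g x * (g x * h x))) x :=
      (hfx.hasDerivAt).mul h2
    exact (h1.add h3).deriv
  have hD1 : deriv (fun y => f y * h y) x = deriv f x * h x + f x * (g x * h x) :=
    ((hfx.hasDerivAt).mul hhx).deriv
  rw [hD2, hD1, hs']
  have hFx : (∫ y in c..x, b y / a y) = F x := rfl
  rw [hFx, Real.exp_neg]
  have hhx0 : h x = Real.exp (F x) := rfl
  rw [← hhx0]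
  have hhne : h x ≠ 0 := Real.exp_ne_zero _
  have hane' : a x ≠ 0 := hane x hx
  have hgx : g x = b x / a x := rfl
  rw [hgx]
  field_simp
  ring
end

section
/- Let λ ∈ ℝ, let f be continuous on (l,r), and let u be twice continuously differentiable on (l,r) with a u'' + b u' - λ u = -f on (l,r). Assume that m·u and m·f are Lebesgue integrable on (l,x] for every x ∈ (l,r) and that lim_{y→l+} u'(y)/s'(y) = 0 (Neumann condition at l). Then v(x) := ∫_{(l,x]} m(z) u(z) dz is twice differentiable and satisfies a v'' + (a'-b) v' - λ v = -g on (l,r), where g(x) := ∫_{(l,x]} m(z) f(z) dz. (This conjugation of Poisson's equation is the key analytic step in the paper's proof of the Siegmund duality P_t 1_{[l,y]}(x) = P̂_t 1_{[x,r]}(y) between a diffusion and its conjugate.) -/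
/-!
With `s' = exp (-∫ b/a)` and `m = 1/(s' a)` one has `m' = m (b - a')/a`, so `v' = m u` gives
`a v'' + (a' - b) v' = a m u' = u'/s'`. On the other hand the equation for `u` says
`(u'/s')' = m (a u'' + b u') = m (λ u - f)`, and the Neumann condition lets us integrate this
from `l`: `u'(x)/s'(x) = ∫_{(l,x]} m (λ u - f) = λ v(x) - g(x)`.
-/

open MeasureTheory Filter Set Topology

def realIoc (l : EReal) (x : ℝ) : Set ℝ := {z : ℝ | l < (z : EReal) ∧ z ≤ x}

section realIoc

variable {E : Type*} [NormedAddCommGroup E] [NormedSpace ℝ E]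
  {l : EReal} {p q x : ℝ} {F : ℝ → E}

lemma measurableSet_realIoc (l : EReal) (x : ℝ) : MeasurableSet (realIoc l x) :=
  (measurableSet_lt measurable_const continuous_coe_real_ereal.measurable).inter measurableSet_Iic

lemma realIoc_subset_realIoc (h : p ≤ q) : realIoc l p ⊆ realIoc l q :=
  fun _ hz => ⟨hz.1, hz.2.trans h⟩

lemma Ioc_subset_realIoc (hp : l < p) : Ioc p q ⊆ realIoc l q :=
  fun _ hz => ⟨hp.trans (EReal.coe_lt_coe_iff.2 hz.1), hz.2⟩

lemma realIoc_union_Ioc (hp : l < p) (hpq : p ≤ q) : realIoc l p ∪ Ioc p q = realIoc l q := by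
  refine (union_subset (realIoc_subset_realIoc hpq) (Ioc_subset_realIoc hp)).antisymm
    fun z hz => ?_
  rcases le_or_gt z p with hzp | hpz
  · exact Or.inl ⟨hz.1, hzp⟩
  · exact Or.inr ⟨hpz, hz.2⟩

lemma setIntegral_realIoc_eq_add_intervalIntegral (hp : l < p) (hq : l < q)
    (hF : IntegrableOn F (realIoc l (max p q))) :
    ∫ z in realIoc l q, F z = (∫ z in realIoc l p, F z) + ∫ z in p..q, F z := by
  wlog hpq : p ≤ q generalizing p q
  · rw [max_comm] at hF
    rw [this hq hp hF (le_of_not_ge hpq), intervalIntegral.integral_symm]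
    abel
  rw [max_eq_right hpq] at hF
  rw [← realIoc_union_Ioc hp hpq, intervalIntegral.integral_of_le hpq,
    setIntegral_union (disjoint_left.2 fun _ hz hz' => not_lt.2 hz.2 hz'.1) measurableSet_Ioc
      (hF.mono_set (realIoc_subset_realIoc hpq)) (hF.mono_set (Ioc_subset_realIoc hp))]

lemma hasDerivAt_setIntegral_realIoc [CompleteSpace E] {t : ℝ} (hx : l < x) (hxt : x < t)
    (hF : IntegrableOn F (realIoc l t)) (hFx : ContinuousAt F x) :
    HasDerivAt (fun y => ∫ z in realIoc l y, F z) (F x) x := by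
  have hU : Real.toEReal ⁻¹' Ioo l t ∈ 𝓝 x :=
    (isOpen_Ioo.preimage continuous_coe_real_ereal).mem_nhds ⟨hx, EReal.coe_lt_coe_iff.2 hxt⟩
  have hFU : IntegrableOn F (Real.toEReal ⁻¹' Ioo l t) :=
    hF.mono_set fun z hz => ⟨hz.1, (EReal.coe_lt_coe_iff.1 hz.2).le⟩
  refine ((intervalIntegral.integral_hasDerivAt_right .refl ⟨_, hU, hFU.aestronglyMeasurable⟩
    hFx).const_add (∫ z in realIoc l x, F z)).congr_of_eventuallyEq ?_
  filter_upwards [hU] with y hy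
  exact setIntegral_realIoc_eq_add_intervalIntegral hx hy.1 (hF.mono_set
    (realIoc_subset_realIoc (max_le hxt.le (EReal.coe_lt_coe_iff.1 hy.2).le)))

lemma tendsto_setIntegral_realIoc_nhdsGT [CompleteSpace E] (hx : l < x)
    (hF : IntegrableOn F (realIoc l x)) :
    Tendsto (fun t => ∫ z in realIoc l t, F z) (comap (↑) (𝓝[>] l)) (𝓝 0) := by
  have hle : ∀ᶠ t in comap ((↑) : ℝ → EReal) (𝓝[>] l), t ≤ x :=
    (tendsto_comap.eventually_mem (Ioo_mem_nhdsGT hx)).mono fun _ ht =>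
      (EReal.coe_lt_coe_iff.1 ht.2).le
  have hlim : Tendsto (fun t => ∫ z, (realIoc l t).indicator F z) (comap (↑) (𝓝[>] l))
      (𝓝 (∫ _ : ℝ, (0 : E))) := by
    refine tendsto_integral_filter_of_dominated_convergence
      (fun z => ‖(realIoc l x).indicator F z‖) ?_ ?_ ?_ (ae_of_all _ fun z => ?_)
    · filter_upwards [hle] with t ht
      exact ((hF.mono_set (realIoc_subset_realIoc ht)).integrable_indicator
        (measurableSet_realIoc l t)).aestronglyMeasurable
    · filter_upwards [hle] with t ht
      exact ae_of_all _ (norm_indicator_le_of_subset (realIoc_subset_realIoc ht) F)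
    · exact (hF.integrable_indicator (measurableSet_realIoc l x)).norm
    refine tendsto_const_nhds.congr' ?_
    by_cases hz : l < z
    · filter_upwards [tendsto_comap.eventually_mem (Ioo_mem_nhdsGT hz)] with t ht
      exact (indicator_of_notMem (fun h => not_lt.2 h.2 (EReal.coe_lt_coe_iff.1 ht.2)) F).symm
    · exact Eventually.of_forall fun t => (indicator_of_notMem (fun h => hz h.1) F).symm
  simpa [integral_indicator (measurableSet_realIoc l _)] using hlim

lemma neBot_comap_coe_nhdsGT (hl : l ≠ ⊤) : (comap ((↑) : ℝ → EReal) (𝓝[>] l)).NeBot :=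
  comap_neBot fun s hs => by
    obtain ⟨u, hlu, hus⟩ := (mem_nhdsGT_iff_exists_Ioo_subset' (lt_top_iff_ne_top.2 hl)).1 hs
    obtain ⟨y, hly, hyu⟩ := EReal.lt_iff_exists_real_btwn.1 hlu
    exact ⟨y, hus ⟨hly, hyu⟩⟩

lemma eq_setIntegral_realIoc_of_hasDerivAt_of_tendsto [CompleteSpace E] {h : ℝ → E}
    (hx : l < x) (hderiv : ∀ t : ℝ, l < t → t ≤ x → HasDerivAt h (F t) t)
    (hF : IntegrableOn F (realIoc l x))
    (hlim : Tendsto h (comap (↑) (𝓝[>] l)) (𝓝 0)) :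
    h x = ∫ z in realIoc l x, F z := by
  have hconst : ∀ᶠ t in comap ((↑) : ℝ → EReal) (𝓝[>] l),
      h t - ∫ z in realIoc l t, F z = h x - ∫ z in realIoc l x, F z := by
    filter_upwards [tendsto_comap.eventually_mem (Ioo_mem_nhdsGT hx)] with t ⟨hlt, htx⟩
    replace htx := (EReal.coe_lt_coe_iff.1 htx).le
    rw [setIntegral_realIoc_eq_add_intervalIntegral hlt hx (by rwa [max_eq_right htx]),
      intervalIntegral.integral_eq_sub_of_hasDerivAt (fun y hy => ?_)
        ((intervalIntegrable_iff_integrableOn_Ioc_of_le htx).2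
          (hF.mono_set (Ioc_subset_realIoc hlt)))]
    · abel
    · rw [uIcc_of_le htx] at hy
      exact hderiv y (hlt.trans_le (EReal.coe_le_coe_iff.2 hy.1)) hy.2
  have := neBot_comap_coe_nhdsGT (ne_top_of_lt hx)
  have h0 := tendsto_nhds_unique ((hlim.sub (tendsto_setIntegral_realIoc_nhdsGT hx hF)).congr'
    hconst) tendsto_const_nhds
  rwa [sub_zero, eq_comm, sub_eq_zero] at h0

end realIoc

noncomputable def scaleDensity (a b : ℝ → ℝ) (c x : ℝ) : ℝ :=
  Real.exp (-∫ y in c..x, b y / a y)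

noncomputable def speedDensity (a b : ℝ → ℝ) (c x : ℝ) : ℝ :=
  1 / (scaleDensity a b c x * a x)

lemma scaleDensity_pos (a b : ℝ → ℝ) (c x : ℝ) : 0 < scaleDensity a b c x := Real.exp_pos _

section densities

variable {a b : ℝ → ℝ} {c x : ℝ}

lemma hasDerivAt_scaleDensity {U : Set ℝ} (hU : IsOpen U) (hUc : U.OrdConnected)
    (hba : ContinuousOn (fun y => b y / a y) U) (hc : c ∈ U) (hx : x ∈ U) :
    HasDerivAt (scaleDensity a b c) (-(scaleDensity a b c x * (b x / a x))) x := by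
  have hE : HasDerivAt (fun t => ∫ y in c..t, b y / a y) (b x / a x) x :=
    intervalIntegral.integral_hasDerivAt_right
      ((hba.mono (hUc.uIcc_subset hc hx)).intervalIntegrable)
      (hba.stronglyMeasurableAtFilter hU x hx) (hba.continuousAt (hU.mem_nhds hx))
  have hexp := hE.neg.exp
  rw [mul_neg] at hexp
  exact hexp

lemma hasDerivAt_speedDensity {a' : ℝ}
    (hs : HasDerivAt (scaleDensity a b c) (-(scaleDensity a b c x * (b x / a x))) x)
    (ha : HasDerivAt a a' x) (hax : a x ≠ 0) :
    HasDerivAt (speedDensity a b c) (speedDensity a b c x * ((b x - a') / a x)) x := by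
  have hsx := (scaleDensity_pos a b c x).ne'
  refine ((hasDerivAt_const x (1 : ℝ)).div (hs.mul ha) (mul_ne_zero hsx hax)).congr_deriv ?_
  simp only [speedDensity, Pi.mul_apply]; field_simp; ring

lemma hasDerivAt_div_scaleDensity {w : ℝ → ℝ} {w' : ℝ}
    (hs : HasDerivAt (scaleDensity a b c) (-(scaleDensity a b c x * (b x / a x))) x)
    (hw : HasDerivAt w w' x) (hax : a x ≠ 0) :
    HasDerivAt (fun t => w t / scaleDensity a b c t)
      (speedDensity a b c x * (a x * w' + b x * w x)) x := by
  have hsx := (scaleDensity_pos a b c x).ne'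
  refine (hw.div hs hsx).congr_deriv ?_
  simp only [speedDensity]; field_simp; ring

lemma conjugate_generator_speedDensity_mul {a' y y' : ℝ} (hax : a x ≠ 0) :
    a x * (speedDensity a b c x * ((b x - a') / a x) * y + speedDensity a b c x * y')
      + (a' - b x) * (speedDensity a b c x * y) = y' / scaleDensity a b c x := by
  have hsx := (scaleDensity_pos a b c x).ne'
  simp only [speedDensity]
  field_simp
  ring

end densities

theorem poisson_equation_conjugation_general
    (l r : EReal)
    (I : Set ℝ) (hI : I = {x : ℝ | l < (x : EReal) ∧ (x : EReal) < r})
    (a a' b : ℝ → ℝ) (c : ℝ) (hc : c ∈ I)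
    (ha : ∀ x ∈ I, HasDerivAt a (a' x) x)
    (hb : ContinuousOn b I)
    (hapos : ∀ x ∈ I, 0 < a x)
    (s' m : ℝ → ℝ)
    (hs' : ∀ x : ℝ, s' x = Real.exp (-(∫ y in c..x, b y / a y)))
    (hm : ∀ x : ℝ, m x = 1 / (s' x * a x))
    (lam : ℝ) (f u : ℝ → ℝ)
    (hu1 : ∀ x ∈ I, DifferentiableAt ℝ u x)
    (hu2 : ∀ x ∈ I, DifferentiableAt ℝ (deriv u) x)
    (hode : ∀ x ∈ I,
      a x * deriv (deriv u) x + b x * deriv u x - lam * u x = -(f x))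
    (hintu : ∀ x ∈ I,
      IntegrableOn (fun z => m z * u z) {z : ℝ | l < (z : EReal) ∧ z ≤ x})
    (hintf : ∀ x ∈ I,
      IntegrableOn (fun z => m z * f z) {z : ℝ | l < (z : EReal) ∧ z ≤ x})
    (hNeumann : Filter.Tendsto (fun y : ℝ => deriv u y / s' y)
      (Filter.comap (fun y : ℝ => (y : EReal)) (nhdsWithin l (Set.Ioi l)))
      (nhds 0))
    (v g : ℝ → ℝ)
    (hv : ∀ x : ℝ, v x = ∫ z in {z : ℝ | l < (z : EReal) ∧ z ≤ x}, m z * u z)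
    (hg : ∀ x : ℝ, g x = ∫ z in {z : ℝ | l < (z : EReal) ∧ z ≤ x}, m z * f z) :
    ∀ x ∈ I,
      DifferentiableAt ℝ v x ∧
      DifferentiableAt ℝ (deriv v) x ∧
      a x * deriv (deriv v) x + (a' x - b x) * deriv v x - lam * v x = -(g x) := by
  obtain rfl : s' = scaleDensity a b c := funext hs'
  obtain rfl : m = speedDensity a b c := funext hm
  subst hI
  intro x hx
  set I := {x : ℝ | l < (x : EReal) ∧ (x : EReal) < r}
  have hIopen : IsOpen I := isOpen_Ioo.preimage continuous_coe_real_ereal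
  have hax : ∀ t ∈ I, a t ≠ 0 := fun t ht => (hapos t ht).ne'
  have hscale : ∀ t ∈ I,
      HasDerivAt (scaleDensity a b c) (-(scaleDensity a b c t * (b t / a t))) t := fun t ht =>
    hasDerivAt_scaleDensity hIopen
      (ordConnected_Ioo.preimage_mono EReal.coe_strictMono.monotone)
      (hb.div (fun t ht => (ha t ht).continuousAt.continuousWithinAt) hax) hc ht
  have hspeed : ∀ t ∈ I, HasDerivAt (speedDensity a b c) _ t := fun t ht =>
    hasDerivAt_speedDensity (hscale t ht) (ha t ht) (hax t ht)
  have hv' : ∀ y ∈ I, HasDerivAt v (speedDensity a b c y * u y) y := fun y hy => by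
    obtain ⟨t, hyt, htr⟩ := EReal.lt_iff_exists_real_btwn.1 hy.2
    rw [funext hv]
    exact hasDerivAt_setIntegral_realIoc hy.1 (EReal.coe_lt_coe_iff.1 hyt)
      (hintu t ⟨hy.1.trans hyt, htr⟩) ((hspeed y hy).continuousAt.mul (hu1 y hy).continuousAt)
  have hv'' := ((hspeed x hx).mul (hu1 x hx).hasDerivAt).congr_of_eventuallyEq
    (eventually_of_mem (hIopen.mem_nhds hx) fun y hy => (hv' y hy).deriv)
  have hflux : deriv u x / scaleDensity a b c x = lam * v x - g x := by
    rw [hv, hg, ← integral_const_mul, ← integral_sub ((hintu x hx).const_mul lam) (hintf x hx)]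
    refine eq_setIntegral_realIoc_of_hasDerivAt_of_tendsto
      (F := fun z => lam * (speedDensity a b c z * u z) - speedDensity a b c z * f z) hx.1
      (fun t hlt htx => ?_) (((hintu x hx).const_mul lam).sub (hintf x hx)) hNeumann
    have ht : t ∈ I := ⟨hlt, (EReal.coe_le_coe_iff.2 htx).trans_lt hx.2⟩
    exact (hasDerivAt_div_scaleDensity (hscale t ht) (hu2 t ht).hasDerivAt
      (hax t ht)).congr_deriv (by linear_combination speedDensity a b c t * hode t ht)
  refine ⟨(hv' x hx).differentiableAt, hv''.differentiableAt, ?_⟩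
  rw [hv''.deriv, (hv' x hx).deriv, conjugate_generator_speedDensity_mul (hax x hx), hflux]
  ring

/-- Conjugation of Poisson's equation: if `a u'' + b u' - λ u = -f` on `(l,r)` with the
Neumann condition `u'/s' → 0` at `l⁺`, then `v(x) = ∫_{(l,x]} m u` is twice differentiable
and satisfies `a v'' + (a'-b) v' - λ v = -g` on `(l,r)`, where `g(x) = ∫_{(l,x]} m f`. -/
theorem poisson_equation_conjugation
    (l r : EReal) (hlr : l < r)
    (I : Set ℝ) (hI : I = {x : ℝ | l < (x : EReal) ∧ (x : EReal) < r})
    (a a' b : ℝ → ℝ) (c : ℝ) (hc : c ∈ I)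
    (ha : ∀ x ∈ I, HasDerivAt a (a' x) x)
    (ha' : ContinuousOn a' I)
    (hb : ContinuousOn b I)
    (hapos : ∀ x ∈ I, 0 < a x)
    (s' m : ℝ → ℝ)
    (hs' : ∀ x : ℝ, s' x = Real.exp (-(∫ y in c..x, b y / a y)))
    (hm : ∀ x : ℝ, m x = 1 / (s' x * a x))
    (lam : ℝ) (f u : ℝ → ℝ)
    (hf : ContinuousOn f I)
    (hu1 : ∀ x ∈ I, DifferentiableAt ℝ u x)
    (hu2 : ∀ x ∈ I, DifferentiableAt ℝ (deriv u) x)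
    (hu2c : ContinuousOn (deriv (deriv u)) I)
    (hode : ∀ x ∈ I,
      a x * deriv (deriv u) x + b x * deriv u x - lam * u x = -(f x))
    (hintu : ∀ x ∈ I,
      IntegrableOn (fun z => m z * u z) {z : ℝ | l < (z : EReal) ∧ z ≤ x})
    (hintf : ∀ x ∈ I,
      IntegrableOn (fun z => m z * f z) {z : ℝ | l < (z : EReal) ∧ z ≤ x})
    (hNeumann : Filter.Tendsto (fun y : ℝ => deriv u y / s' y)
      (Filter.comap (fun y : ℝ => (y : EReal)) (nhdsWithin l (Set.Ioi l)))
      (nhds 0))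
    (v g : ℝ → ℝ)
    (hv : ∀ x : ℝ, v x = ∫ z in {z : ℝ | l < (z : EReal) ∧ z ≤ x}, m z * u z)
    (hg : ∀ x : ℝ, g x = ∫ z in {z : ℝ | l < (z : EReal) ∧ z ≤ x}, m z * f z) :
    ∀ x ∈ I,
      DifferentiableAt ℝ v x ∧
      DifferentiableAt ℝ (deriv v) x ∧
      a x * deriv (deriv v) x + (a' x - b x) * deriv v x - lam * v x = -(g x) :=
  poisson_equation_conjugation_general l r I hI a a' b c hc ha hb hapos s' m hs' hm lam f u hu1 hu2
    hode hintu hintf hNeumann v g hv hg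
end

section
/- Let n ≥ 1 and α ∈ ℝ, and let h_n(x) = ∏_{1 ≤ i < j ≤ n} (x_j - x_i) be the Vandermonde determinant on ℝ^n. Then for all x ∈ ℝ^n, Σ_{i=1}^n (1/2) x_i² ∂²h_n/∂x_i²(x) + α Σ_{i=1}^n x_i ∂h_n/∂x_i(x) = c_{n,α} · h_n(x), where c_{n,α} = (n(n-1)/2)·(α + (n-2)/3); i.e. the Vandermonde determinant is a polynomial eigenfunction of the generator of n independent geometric Brownian motions with drift parameter α. -/
open Finset

private lemma vdm_derivSum {ι : Type*} [DecidableEq ι] (S : Finset ι) (c : ι → ℝ) (m : ι → ℕ) :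
    deriv (fun t : ℝ => ∑ σ ∈ S, c σ * t ^ m σ)
      = fun t => ∑ σ ∈ S, c σ * ((m σ : ℝ) * t ^ (m σ - 1)) := by
  funext t
  rw [deriv_fun_sum (fun σ _ => by fun_prop)]
  exact Finset.sum_congr rfl fun σ _ => by simp [deriv_const_mul_field, deriv_pow]

private lemma vdm_mulDeriv {ι : Type*} [DecidableEq ι] (S : Finset ι) (c : ι → ℝ) (m : ι → ℕ)
    (x : ℝ) :
    x * deriv (fun t : ℝ => ∑ σ ∈ S, c σ * t ^ m σ) x
      = ∑ σ ∈ S, (m σ : ℝ) * (c σ * x ^ m σ) := by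
  rw [vdm_derivSum, Finset.mul_sum]
  refine Finset.sum_congr rfl fun σ _ => ?_
  rcases m σ with _ | k
  · simp
  · simp only [Nat.add_sub_cancel]; push_cast; ring

private lemma vdm_mulDeriv2 {ι : Type*} [DecidableEq ι] (S : Finset ι) (c : ι → ℝ) (m : ι → ℕ)
    (x : ℝ) :
    (1/2 : ℝ) * x ^ 2 * iteratedDeriv 2 (fun t : ℝ => ∑ σ ∈ S, c σ * t ^ m σ) x
      = ∑ σ ∈ S, ((m σ : ℝ) * ((m σ : ℝ) - 1) / 2) * (c σ * x ^ m σ) := by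
  rw [show (2:ℕ) = 1 + 1 from rfl, iteratedDeriv_succ, iteratedDeriv_one, vdm_derivSum]
  have : deriv (fun t : ℝ => ∑ σ ∈ S, c σ * ((m σ : ℝ) * t ^ (m σ - 1))) x
      = ∑ σ ∈ S, c σ * ((m σ : ℝ) * ((m σ - 1 : ℕ) * x ^ (m σ - 1 - 1))) := by
    rw [deriv_fun_sum (fun σ _ => by fun_prop)]
    exact Finset.sum_congr rfl fun σ _ => by simp [deriv_const_mul_field, deriv_pow, mul_assoc]
  rw [this, Finset.mul_sum]
  refine Finset.sum_congr rfl fun σ _ => ?_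
  rcases m σ with _ | k
  · simp
  · rcases k with _ | l
    · simp
    · simp only [Nat.add_sub_cancel]; push_cast; ring

private lemma vdm_sumA (n : ℕ) :
    ∑ k ∈ Finset.range n, ((k:ℝ) * ((k:ℝ) - 1) / 2)
      = (n:ℝ) * ((n:ℝ) - 1) * ((n:ℝ) - 2) / 6 := by
  induction n with
  | zero => norm_num
  | succ m ih => rw [Finset.sum_range_succ, ih]; push_cast; ring

private lemma vdm_sumB (n : ℕ) :
    ∑ k ∈ Finset.range n, (k:ℝ) = (n:ℝ) * ((n:ℝ) - 1) / 2 := by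
  induction n with
  | zero => norm_num
  | succ m ih => rw [Finset.sum_range_succ, ih]; push_cast; ring

/-- The Vandermonde determinant `h_n(x) = ∏_{i<j} (x_j - x_i)` is a polynomial eigenfunction
of the generator of `n` independent geometric Brownian motions with drift parameter `α`:
`Σ_i (1/2) x_i² ∂²_i h_n + α Σ_i x_i ∂_i h_n = (n(n-1)/2)·(α + (n-2)/3) · h_n`. -/
theorem vandermonde_eigenfunction_geometric_BM (n : ℕ) (hn : 1 ≤ n) (α : ℝ)
    (h : (Fin n → ℝ) → ℝ)
    (hh : ∀ x : Fin n → ℝ, h x = ∏ j : Fin n, ∏ i ∈ Finset.Iio j, (x j - x i)) :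
    ∀ x : Fin n → ℝ,
      (∑ i : Fin n, (1 / 2 : ℝ) * (x i) ^ 2 *
          iteratedDeriv 2 (fun t => h (Function.update x i t)) (x i))
        + α * ∑ i : Fin n, x i * deriv (fun t => h (Function.update x i t)) (x i)
      = ((n : ℝ) * ((n : ℝ) - 1) / 2) * (α + ((n : ℝ) - 2) / 3) * h x := by
  -- expansion of h as a sum of signed monomials
  have hdet : ∀ y : Fin n → ℝ, h y
      = ∑ σ : Equiv.Perm (Fin n), (Equiv.Perm.sign σ : ℝ) * ∏ k, y k ^ (σ k : ℕ) := by
    intro y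
    rw [hh]
    have h1 : ∏ j : Fin n, ∏ i ∈ Finset.Iio j, (y j - y i)
        = ∏ i : Fin n, ∏ j ∈ Finset.Ioi i, (y j - y i) := by
      rw [Finset.prod_comm'
        (s' := fun i : Fin n => Finset.Ioi i) (t' := Finset.univ)
        (fun j i => by simp)]
    rw [h1, ← Matrix.det_vandermonde, ← Matrix.det_transpose, Matrix.det_apply]
    simp [Matrix.vandermonde, Units.smul_def, zsmul_eq_mul]
  intro x
  -- coefficients of the one-variable polynomial in coordinate i
  set C : Fin n → Equiv.Perm (Fin n) → ℝ := fun i σ =>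
    (Equiv.Perm.sign σ : ℝ) * ∏ k ∈ Finset.univ.erase i, x k ^ (σ k : ℕ) with hC
  set M : Equiv.Perm (Fin n) → ℝ := fun σ =>
    (Equiv.Perm.sign σ : ℝ) * ∏ k, x k ^ (σ k : ℕ) with hM
  have hupdate : ∀ (i : Fin n) (t : ℝ),
      h (Function.update x i t) = ∑ σ : Equiv.Perm (Fin n), C i σ * t ^ (σ i : ℕ) := by
    intro i t
    rw [hdet]
    refine Finset.sum_congr rfl fun σ _ => ?_
    rw [hC]
    have := (Finset.mul_prod_erase Finset.univ
      (fun k => Function.update x i t k ^ (σ k : ℕ)) (Finset.mem_univ i)).symm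
    rw [this, Function.update_self]
    have h2 : ∏ k ∈ Finset.univ.erase i, Function.update x i t k ^ (σ k : ℕ)
        = ∏ k ∈ Finset.univ.erase i, x k ^ (σ k : ℕ) :=
      Finset.prod_congr rfl fun k hk => by
        rw [Function.update_of_ne (Finset.ne_of_mem_erase hk)]
    rw [h2]; ring
  have hfun : ∀ i : Fin n, (fun t => h (Function.update x i t))
      = fun t => ∑ σ : Equiv.Perm (Fin n), C i σ * t ^ (σ i : ℕ) := by
    intro i; funext t; exact hupdate i t
  have hCM : ∀ (i : Fin n) (σ : Equiv.Perm (Fin n)), C i σ * x i ^ (σ i : ℕ) = M σ := by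
    intro i σ
    show ((Equiv.Perm.sign σ : ℝ) * ∏ k ∈ Finset.univ.erase i, x k ^ (σ k : ℕ))
        * x i ^ (σ i : ℕ)
      = (Equiv.Perm.sign σ : ℝ) * ∏ k, x k ^ (σ k : ℕ)
    rw [← Finset.mul_prod_erase Finset.univ
      (fun k => x k ^ (σ k : ℕ)) (Finset.mem_univ i)]
    ring
  have term2 : ∀ i : Fin n, x i * deriv (fun t => h (Function.update x i t)) (x i)
      = ∑ σ : Equiv.Perm (Fin n), ((σ i : ℕ) : ℝ) * M σ := by
    intro i
    rw [hfun i, vdm_mulDeriv]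
    exact Finset.sum_congr rfl fun σ _ => by rw [hCM i σ]
  have term1 : ∀ i : Fin n, (1 / 2 : ℝ) * (x i) ^ 2 *
        iteratedDeriv 2 (fun t => h (Function.update x i t)) (x i)
      = ∑ σ : Equiv.Perm (Fin n),
          (((σ i : ℕ) : ℝ) * (((σ i : ℕ) : ℝ) - 1) / 2) * M σ := by
    intro i
    rw [hfun i, vdm_mulDeriv2]
    exact Finset.sum_congr rfl fun σ _ => by rw [hCM i σ]
  -- sums of eigenvalue pieces over a permutation
  have hpermA : ∀ σ : Equiv.Perm (Fin n),
      ∑ i : Fin n, (((σ i : ℕ) : ℝ) * (((σ i : ℕ) : ℝ) - 1) / 2)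
        = (n:ℝ) * ((n:ℝ) - 1) * ((n:ℝ) - 2) / 6 := by
    intro σ
    rw [Equiv.sum_comp σ (fun k : Fin n => ((k : ℕ) : ℝ) * (((k : ℕ) : ℝ) - 1) / 2),
      Fin.sum_univ_eq_sum_range (fun k => ((k : ℕ) : ℝ) * (((k : ℕ) : ℝ) - 1) / 2), vdm_sumA]
  have hpermB : ∀ σ : Equiv.Perm (Fin n),
      ∑ i : Fin n, ((σ i : ℕ) : ℝ) = (n:ℝ) * ((n:ℝ) - 1) / 2 := by
    intro σ
    rw [Equiv.sum_comp σ (fun k : Fin n => ((k : ℕ) : ℝ)),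
      Fin.sum_univ_eq_sum_range (fun k => ((k : ℕ) : ℝ)), vdm_sumB]
  have S1 : (∑ i : Fin n, (1 / 2 : ℝ) * (x i) ^ 2 *
        iteratedDeriv 2 (fun t => h (Function.update x i t)) (x i))
      = ∑ σ : Equiv.Perm (Fin n), ((n:ℝ) * ((n:ℝ) - 1) * ((n:ℝ) - 2) / 6) * M σ := by
    rw [Finset.sum_congr rfl fun i _ => term1 i, Finset.sum_comm]
    exact Finset.sum_congr rfl fun σ _ => by rw [← Finset.sum_mul, hpermA σ]
  have S2 : (∑ i : Fin n, x i * deriv (fun t => h (Function.update x i t)) (x i))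
      = ∑ σ : Equiv.Perm (Fin n), ((n:ℝ) * ((n:ℝ) - 1) / 2) * M σ := by
    rw [Finset.sum_congr rfl fun i _ => term2 i, Finset.sum_comm]
    exact Finset.sum_congr rfl fun σ _ => by rw [← Finset.sum_mul, hpermB σ]
  have hx : h x = ∑ σ : Equiv.Perm (Fin n), M σ := hdet x
  rw [S1, S2, hx, ← Finset.mul_sum, ← Finset.mul_sum]
  ring
end

section
/- Let n ≥ 1, let Ω = {x ∈ ℝ^n : x_i ≠ x_j for all i ≠ j}, let h_n(x) = ∏_{1≤i<j≤n}(x_j - x_i), and let c = (n(n-1)/2)·(1/2 + (n-2)/3). Then for every twice differentiable f : Ω → ℝ and every x ∈ Ω, (1/h_n(x)) · [ Σ_{i=1}^n (1/2)x_i²∂_{x_i}² + (1/2)Σ_{i=1}^n x_i∂_{x_i} ](h_n f)(x) - c·f(x) = (1/2) Σ_{i=1}^n (x_i∂_{x_i})² f(x) + Σ_{i=1}^n Σ_{j≠i} (x_i²/(x_i - x_j)) ∂_{x_i} f(x), where (x_i∂_{x_i})²f = x_i²∂_{x_i}²f + x_i∂_{x_i}f. That is, the quantum Calogero–Sutherland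 Hamiltonian at coupling θ = 1 coincides with the Doob h-transform by the Vandermonde determinant of the generator of n independent geometric Brownian motions with drift parameter 1/2, minus the eigenvalue c. -/
/-! In the coordinate `xᵢ` the Vandermonde product `V` is a constant multiple of
`∏_{j ≠ i} (xᵢ - xⱼ)`, so `∂ᵢV / V = Σ_{j ≠ i} 1/(xᵢ - xⱼ)` and
`∂ᵢ²V / V = Σ_{j ≠ i} Σ_{k ≠ i, j} 1/((xᵢ - xⱼ)(xᵢ - xₖ))`. Expanding `∂ᵢ(V f)` and `∂ᵢ²(V f)` by
Leibniz, the cross terms `xᵢ² (∂ᵢV / V) ∂ᵢf` are the interaction term of the Calogero–Sutherland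
operator, and the terms without derivatives of `f` add up to
`(1/2) Σᵢ (xᵢ ∂ᵢV + xᵢ² ∂ᵢ²V) / V`. Symmetrising over pairs (`a/(a-b) + b/(b-a) = 1`) and
cyclically over triples (`Σ_cyc a²/((a-b)(a-c)) = 1`) shows that this is the constant
`n(n-1)/4 + n(n-1)(n-2)/6 = c`. -/

open Finset Function

section SymmetricSums

variable {ι M : Type*} [Fintype ι] [DecidableEq ι] [AddCommMonoid M]

theorem sum_sum_erase_swap (T : ι → ι → M) :
    ∑ i, ∑ j ∈ univ.erase i, T i j = ∑ i, ∑ j ∈ univ.erase i, T j i :=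
  Finset.sum_comm' (by simp [ne_comm])

theorem sum_sum_erase_sum_erase_cycle (T : ι → ι → ι → M) :
    ∑ i, ∑ j ∈ univ.erase i, ∑ k ∈ (univ.erase i).erase j, T i j k
      = ∑ i, ∑ j ∈ univ.erase i, ∑ k ∈ (univ.erase i).erase j, T j k i := by
  symm
  rw [Finset.sum_comm' (t' := univ) (s' := fun j => univ.erase j) (by simp [ne_comm])]
  refine sum_congr rfl fun i _ => Finset.sum_comm' ?_
  simp only [mem_erase, mem_univ, and_true]
  tauto

theorem sum_sum_erase_one :
    ∑ i : ι, ∑ _j ∈ univ.erase i, (1 : ℝ) = Fintype.card ι * (Fintype.card ι - 1) := by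
  simp only [sum_const, cast_card_erase_of_mem (mem_univ _), nsmul_eq_mul, mul_one, card_univ]

theorem sum_sum_erase_sum_erase_one :
    ∑ i : ι, ∑ j ∈ univ.erase i, ∑ _k ∈ (univ.erase i).erase j, (1 : ℝ)
      = Fintype.card ι * (Fintype.card ι - 1) * (Fintype.card ι - 2) := by
  have hcard (i j : ι) (hj : j ∈ univ.erase i) :
      (#((univ.erase i).erase j) : ℝ) = Fintype.card ι - 2 := by
    rw [cast_card_erase_of_mem hj, cast_card_erase_of_mem (mem_univ _), card_univ]
    ring
  simp only [sum_const, nsmul_eq_mul, mul_one]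
  rw [← sum_sum_erase_one]
  simp only [sum_mul, one_mul]
  exact sum_congr rfl fun i _ => sum_congr rfl fun j hj => hcard i j hj

/- For injective `y`, `sumInvSub y i = ∂ᵢV(y) / V(y)` and `sumInvSubMulInvSub y i = ∂ᵢ²V(y) / V(y)`
for the Vandermonde product `V`. -/
noncomputable def sumInvSub (y : ι → ℝ) (i : ι) : ℝ := ∑ j ∈ univ.erase i, (y i - y j)⁻¹

noncomputable def sumInvSubMulInvSub (y : ι → ℝ) (i : ι) : ℝ :=
  ∑ j ∈ univ.erase i, ∑ k ∈ (univ.erase i).erase j, (y i - y j)⁻¹ * (y i - y k)⁻¹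

theorem sum_mul_sumInvSub {y : ι → ℝ} (hy : Injective y) :
    ∑ i, y i * sumInvSub y i = Fintype.card ι * (Fintype.card ι - 1) / 2 := by
  set T : ι → ι → ℝ := fun i j => y i * (y i - y j)⁻¹
  have hpair (i j : ι) (hj : j ∈ univ.erase i) : T i j + T j i = 1 := by
    simp only [T]
    have hij := sub_ne_zero.2 (hy.ne (ne_of_mem_erase hj).symm)
    rw [← neg_sub (y i), inv_neg, mul_neg, ← sub_eq_add_neg, ← sub_mul, mul_inv_cancel₀ hij]
  have hsum := calc
    2 * ∑ i, ∑ j ∈ univ.erase i, T i j = ∑ i, ∑ j ∈ univ.erase i, (T i j + T j i) := by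
      rw [two_mul]
      nth_rw 2 [sum_sum_erase_swap]
      simp only [sum_add_distrib]
    _ = Fintype.card ι * (Fintype.card ι - 1) := by
      rw [← sum_sum_erase_one]
      exact sum_congr rfl fun i _ => sum_congr rfl fun j hj => hpair i j hj
  simp only [sumInvSub, mul_sum]
  linarith

theorem sq_div_add_sq_div_add_sq_div {a b c : ℝ} (hab : a ≠ b) (hbc : b ≠ c) (hca : c ≠ a) :
    a ^ 2 / ((a - b) * (a - c)) + b ^ 2 / ((b - c) * (b - a)) + c ^ 2 / ((c - a) * (c - b))
      = 1 := by
  have := sub_ne_zero.2 hab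
  have := sub_ne_zero.2 hbc
  have := sub_ne_zero.2 hca
  have := sub_ne_zero.2 hab.symm
  have := sub_ne_zero.2 hbc.symm
  have := sub_ne_zero.2 hca.symm
  field_simp
  ring

theorem sum_sq_mul_sumInvSubMulInvSub {y : ι → ℝ} (hy : Injective y) :
    ∑ i, y i ^ 2 * sumInvSubMulInvSub y i
      = Fintype.card ι * (Fintype.card ι - 1) * (Fintype.card ι - 2) / 3 := by
  set T : ι → ι → ι → ℝ := fun i j k => y i ^ 2 / ((y i - y j) * (y i - y k))
  have htriple (i j k : ι) (hj : j ∈ univ.erase i) (hk : k ∈ (univ.erase i).erase j) :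
      T i j k + T j k i + T k i j = 1 :=
    sq_div_add_sq_div_add_sq_div (hy.ne (ne_of_mem_erase hj).symm)
      (hy.ne (ne_of_mem_erase hk).symm) (hy.ne (ne_of_mem_erase (mem_of_mem_erase hk)))
  have hsum := calc
    3 * ∑ i, ∑ j ∈ univ.erase i, ∑ k ∈ (univ.erase i).erase j, T i j k
        = ∑ i, ∑ j ∈ univ.erase i, ∑ k ∈ (univ.erase i).erase j,
            (T i j k + T j k i + T k i j) := by
      have h1 := sum_sum_erase_sum_erase_cycle T
      have h2 := sum_sum_erase_sum_erase_cycle fun i j k => T j k i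
      simp only [sum_add_distrib, ← h1, ← h2]
      ring
    _ = Fintype.card ι * (Fintype.card ι - 1) * (Fintype.card ι - 2) := by
      rw [← sum_sum_erase_sum_erase_one]
      exact sum_congr rfl fun i _ => sum_congr rfl fun j hj => sum_congr rfl fun k hk =>
        htriple i j k hj hk
  simp only [sumInvSubMulInvSub, mul_sum, ← mul_inv]
  simp only [← div_eq_mul_inv]
  linarith

end SymmetricSums

section ProdSub

variable {ι 𝕜 : Type*} [DecidableEq ι] [NontriviallyNormedField 𝕜] (s : Finset ι) (a : ι → 𝕜)
  (t : 𝕜)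

theorem hasDerivAt_prod_sub :
    HasDerivAt (fun u => ∏ j ∈ s, (u - a j)) (∑ j ∈ s, ∏ k ∈ s.erase j, (t - a k)) t := by
  simpa using HasDerivAt.fun_finsetProd (u := s) (f := fun j u => u - a j) (f' := fun _ => 1)
    fun j _ => (hasDerivAt_id t).sub_const (a j)

variable {s a t}

theorem prod_erase_sub_eq (hs : ∀ j ∈ s, t ≠ a j) {j : ι} (hj : j ∈ s) :
    ∏ k ∈ s.erase j, (t - a k) = (∏ k ∈ s, (t - a k)) * (t - a j)⁻¹ := by
  rw [← mul_prod_erase s _ hj, mul_comm, inv_mul_cancel_left₀ (sub_ne_zero.2 (hs j hj))]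

theorem sum_prod_erase_sub_eq (hs : ∀ j ∈ s, t ≠ a j) :
    ∑ j ∈ s, ∏ k ∈ s.erase j, (t - a k) = (∏ k ∈ s, (t - a k)) * ∑ j ∈ s, (t - a j)⁻¹ := by
  rw [mul_sum]
  exact sum_congr rfl fun j hj => prod_erase_sub_eq hs hj

theorem deriv_prod_sub (hs : ∀ j ∈ s, t ≠ a j) :
    deriv (fun u => ∏ j ∈ s, (u - a j)) t = (∏ j ∈ s, (t - a j)) * ∑ j ∈ s, (t - a j)⁻¹ := by
  rw [(hasDerivAt_prod_sub s a t).deriv, sum_prod_erase_sub_eq hs]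

theorem iteratedDeriv_two_prod_sub (hs : ∀ j ∈ s, t ≠ a j) :
    iteratedDeriv 2 (fun u => ∏ j ∈ s, (u - a j)) t
      = (∏ j ∈ s, (t - a j)) * ∑ j ∈ s, ∑ k ∈ s.erase j, (t - a j)⁻¹ * (t - a k)⁻¹ := by
  have hderiv :
      deriv (fun u => ∏ j ∈ s, (u - a j)) = fun u => ∑ j ∈ s, ∏ k ∈ s.erase j, (u - a k) :=
    funext fun u => (hasDerivAt_prod_sub s a u).deriv
  rw [iteratedDeriv_succ, iteratedDeriv_one, hderiv,
    (HasDerivAt.fun_sum fun j _ => hasDerivAt_prod_sub (s.erase j) a t).deriv, mul_sum]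
  refine sum_congr rfl fun j hj => ?_
  have hs' : ∀ k ∈ s.erase j, t ≠ a k := fun k hk => hs k (mem_of_mem_erase hk)
  rw [sum_prod_erase_sub_eq hs', prod_erase_sub_eq hs hj, mul_sum, mul_sum]
  exact sum_congr rfl fun k _ => by ring

end ProdSub

theorem iteratedDeriv_two_fun_mul {𝕜 : Type*} [NontriviallyNormedField 𝕜] {f g : 𝕜 → 𝕜} {x : 𝕜}
    (hf : ContDiffAt 𝕜 2 f x) (hg : ContDiffAt 𝕜 2 g x) :
    iteratedDeriv 2 (fun t => f t * g t) x
      = iteratedDeriv 2 f x * g x + 2 * (deriv f x * deriv g x) + f x * iteratedDeriv 2 g x := by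
  rw [iteratedDeriv_fun_mul hf hg]
  simp only [sum_range_succ, range_one, sum_singleton, Nat.choose_zero_right, Nat.cast_one,
    iteratedDeriv_zero, one_mul, tsub_zero, Nat.choose_succ_self_right,
    iteratedDeriv_one, Nat.add_one_sub_one, Nat.choose_self, tsub_self]
  ring

theorem isOpen_setOf_pairwise_ne {ι X : Type*} [Finite ι] [TopologicalSpace X] [T2Space X] :
    IsOpen {x : ι → X | ∀ i j, i ≠ j → x i ≠ x j} := by
  simp only [Set.ofPred_forall]
  refine isOpen_iInter_of_finite fun i => isOpen_iInter_of_finite fun j => ?_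
  by_cases hij : i = j
  · simp [hij]
  · simpa [hij] using isOpen_ne_fun (continuous_apply i) (continuous_apply j)

theorem ContDiffAt.comp_update {𝕜 ι E G : Type*} [NontriviallyNormedField 𝕜] [Fintype ι]
    [DecidableEq ι] [NormedAddCommGroup E] [NormedSpace 𝕜 E] [NormedAddCommGroup G]
    [NormedSpace 𝕜 G] {f : (ι → E) → G} {x : ι → E} {k : WithTop ℕ∞} (hf : ContDiffAt 𝕜 k f x)
    (i : ι) : ContDiffAt 𝕜 k (fun t => f (update x i t)) (x i) := by
  rw [← update_eq_self i x] at hf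
  exact hf.comp (x i) (contDiff_update k x i).contDiffAt

section Vandermonde

variable {n : ℕ}

def vandermondeProd (x : Fin n → ℝ) : ℝ := ∏ j, ∏ k ∈ Iio j, (x j - x k)

theorem prod_Iio_sub_update_of_ne (x : Fin n → ℝ) {i j : Fin n} (hji : j ≠ i) (t : ℝ) :
    ∏ k ∈ Iio j, (update x i t j - update x i t k)
      = (if j ∈ Ioi i then x j - t else 1) * ∏ k ∈ (Iio j).erase i, (x j - x k) := by
  have hupdate (k : Fin n) :
      update x i t j - update x i t k = update (fun k => x j - x k) i (x j - t) k := by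
    rw [update_of_ne hji]
    exact apply_update (fun _ s => x j - s) x i t k
  simp only [hupdate, mem_Ioi]
  split_ifs with hij
  · rw [prod_update_of_mem (mem_Iio.2 hij), sdiff_singleton_eq_erase]
  · rw [one_mul, prod_update_of_notMem (by simpa using hij),
      erase_eq_of_notMem (by simpa using hij)]

theorem exists_vandermondeProd_update_eq (x : Fin n → ℝ) (i : Fin n) :
    ∃ K, ∀ t, vandermondeProd (update x i t) = K * ∏ j ∈ univ.erase i, (t - x j) := by
  refine ⟨(-1) ^ #(Ioi i) * ∏ j ∈ univ.erase i, ∏ k ∈ (Iio j).erase i, (x j - x k), fun t => ?_⟩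
  have hi : ∏ k ∈ Iio i, (update x i t i - update x i t k) = ∏ k ∈ Iio i, (t - x k) :=
    prod_congr rfl fun k hk => by rw [update_self, update_of_ne (mem_Iio.1 hk).ne]
  have hsplit :
      ∏ j ∈ univ.erase i, (t - x j) = (∏ j ∈ Iio i, (t - x j)) * ∏ j ∈ Ioi i, (t - x j) := by
    rw [mul_comm, ← prod_union (disjoint_Ioi_Iio i)]
    congr 1
    ext k
    simp only [mem_erase, mem_univ, and_true, mem_union, mem_Ioi, mem_Iio]
    exact ne_iff_lt_or_gt.trans or_comm
  have hinter : univ.erase i ∩ Ioi i = Ioi i :=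
    inter_eq_right.2 fun _ hk => mem_erase.2 ⟨(mem_Ioi.1 hk).ne', mem_univ _⟩
  rw [vandermondeProd, ← mul_prod_erase univ _ (mem_univ i), hi,
    prod_congr rfl fun j hj => prod_Iio_sub_update_of_ne x (ne_of_mem_erase hj) t,
    prod_mul_distrib, prod_ite_mem, hinter, hsplit]
  simp only [← neg_sub t, prod_neg]
  ring

theorem vandermondeProd_ne_zero {x : Fin n → ℝ} (hx : Injective x) : vandermondeProd x ≠ 0 :=
  prod_ne_zero_iff.2 fun _ _ => prod_ne_zero_iff.2 fun _ hk =>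
    sub_ne_zero.2 (hx.ne (mem_Iio.1 hk).ne')

variable {x : Fin n → ℝ} (i : Fin n) {F : ℝ → ℝ}

theorem deriv_vandermondeProd_update_mul (hx : Injective x) (hF : DifferentiableAt ℝ F (x i)) :
    deriv (fun t => vandermondeProd (update x i t) * F t) (x i)
      = vandermondeProd x * (sumInvSub x i * F (x i) + deriv F (x i)) := by
  obtain ⟨K, hK⟩ := exists_vandermondeProd_update_eq x i
  have hs : ∀ j ∈ univ.erase i, x i ≠ x j := fun j hj => hx.ne (ne_of_mem_erase hj).symm
  have hVx := hK (x i)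
  rw [update_eq_self] at hVx
  simp only [hK, sumInvSub]
  rw [deriv_fun_mul ((hasDerivAt_prod_sub _ x _).differentiableAt.const_mul K) hF,
    deriv_const_mul_field, deriv_prod_sub hs, hVx]
  ring

theorem iteratedDeriv_two_vandermondeProd_update_mul (hx : Injective x)
    (hF : ContDiffAt ℝ 2 F (x i)) :
    iteratedDeriv 2 (fun t => vandermondeProd (update x i t) * F t) (x i)
      = vandermondeProd x * (sumInvSubMulInvSub x i * F (x i)
          + 2 * (sumInvSub x i * deriv F (x i))
          + iteratedDeriv 2 F (x i)) := by
  obtain ⟨K, hK⟩ := exists_vandermondeProd_update_eq x i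
  have hs : ∀ j ∈ univ.erase i, x i ≠ x j := fun j hj => hx.ne (ne_of_mem_erase hj).symm
  have hVx := hK (x i)
  rw [update_eq_self] at hVx
  simp only [hK, sumInvSub, sumInvSubMulInvSub]
  rw [iteratedDeriv_two_fun_mul (by fun_prop) hF, iteratedDeriv_const_mul_field,
    deriv_const_mul_field, deriv_prod_sub hs, iteratedDeriv_two_prod_sub hs, hVx]
  ring

end Vandermonde

theorem calogero_sutherland_is_htransform_of_geometric_BM_general (n : ℕ)
    (Ω : Set (Fin n → ℝ)) (hΩ : Ω = {x : Fin n → ℝ | ∀ i j : Fin n, i ≠ j → x i ≠ x j})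
    (h : (Fin n → ℝ) → ℝ)
    (hh : ∀ x : Fin n → ℝ, h x = ∏ j : Fin n, ∏ i ∈ Finset.Iio j, (x j - x i))
    (c : ℝ) (hc : c = ((n : ℝ) * ((n : ℝ) - 1) / 2) * (1 / 2 + ((n : ℝ) - 2) / 3))
    (f : (Fin n → ℝ) → ℝ) (hf : ContDiffOn ℝ 2 f Ω) :
    ∀ x ∈ Ω,
      (1 / h x) *
          ((∑ i : Fin n, (1 / 2 : ℝ) * (x i) ^ 2 *
              iteratedDeriv 2
                (fun t => h (Function.update x i t) * f (Function.update x i t)) (x i))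
            + (1 / 2 : ℝ) * ∑ i : Fin n, x i *
                deriv (fun t => h (Function.update x i t) * f (Function.update x i t)) (x i))
        - c * f x
      = (1 / 2 : ℝ) * ∑ i : Fin n,
            ((x i) ^ 2 * iteratedDeriv 2 (fun t => f (Function.update x i t)) (x i)
              + x i * deriv (fun t => f (Function.update x i t)) (x i))
        + ∑ i : Fin n, ∑ j ∈ Finset.univ.erase i,
            ((x i) ^ 2 / (x i - x j)) * deriv (fun t => f (Function.update x i t)) (x i) := by
  obtain rfl : h = vandermondeProd := funext hh
  subst hΩ
  intro x hxΩ
  have hx : Injective x := fun i j hij => by_contra fun hne => hxΩ i j hne hij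
  have hF (i : Fin n) : ContDiffAt ℝ 2 (fun t => f (update x i t)) (x i) :=
    (hf.contDiffAt (isOpen_setOf_pairwise_ne.mem_nhds hxΩ)).comp_update i
  simp only [deriv_vandermondeProd_update_mul _ hx ((hF _).differentiableAt two_ne_zero),
    iteratedDeriv_two_vandermondeProd_update_mul _ hx (hF _), update_eq_self]
  have hcross (i : Fin n) :
      ∑ j ∈ univ.erase i, x i ^ 2 / (x i - x j) * deriv (fun t => f (update x i t)) (x i)
        = x i ^ 2 * sumInvSub x i * deriv (fun t => f (update x i t)) (x i) := by
    simp only [sumInvSub, mul_sum, sum_mul, div_eq_mul_inv]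
  have hc' : c = 1 / 2 * ∑ i, (x i ^ 2 * sumInvSubMulInvSub x i + x i * sumInvSub x i) := by
    rw [hc, sum_add_distrib, sum_mul_sumInvSub hx, sum_sq_mul_sumInvSubMulInvSub hx,
      Fintype.card_fin]
    ring
  have hV := vandermondeProd_ne_zero hx
  rw [hc']
  simp only [hcross, mul_add, mul_sum, sum_mul, ← sum_add_distrib, ← sum_sub_distrib]
  refine sum_congr rfl fun i _ => ?_
  field_simp
  ring

/-- The quantum Calogero–Sutherland Hamiltonian at coupling `θ = 1` coincides with the Doob
h-transform by the Vandermonde determinant of the generator of `n` independent geometric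
Brownian motions with drift parameter `1/2`, minus the eigenvalue
`c = (n(n-1)/2)·(1/2 + (n-2)/3)`. -/
theorem calogero_sutherland_is_htransform_of_geometric_BM (n : ℕ) (hn : 1 ≤ n)
    (Ω : Set (Fin n → ℝ)) (hΩ : Ω = {x : Fin n → ℝ | ∀ i j : Fin n, i ≠ j → x i ≠ x j})
    (h : (Fin n → ℝ) → ℝ)
    (hh : ∀ x : Fin n → ℝ, h x = ∏ j : Fin n, ∏ i ∈ Finset.Iio j, (x j - x i))
    (c : ℝ) (hc : c = ((n : ℝ) * ((n : ℝ) - 1) / 2) * (1 / 2 + ((n : ℝ) - 2) / 3))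
    (f : (Fin n → ℝ) → ℝ) (hf : ContDiffOn ℝ 2 f Ω) :
    ∀ x ∈ Ω,
      (1 / h x) *
          ((∑ i : Fin n, (1 / 2 : ℝ) * (x i) ^ 2 *
              iteratedDeriv 2
                (fun t => h (Function.update x i t) * f (Function.update x i t)) (x i))
            + (1 / 2 : ℝ) * ∑ i : Fin n, x i *
                deriv (fun t => h (Function.update x i t) * f (Function.update x i t)) (x i))
        - c * f x
      = (1 / 2 : ℝ) * ∑ i : Fin n,
            ((x i) ^ 2 * iteratedDeriv 2 (fun t => f (Function.update x i t)) (x i)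
              + x i * deriv (fun t => f (Function.update x i t)) (x i))
        + ∑ i : Fin n, ∑ j ∈ Finset.univ.erase i,
            ((x i) ^ 2 / (x i - x j)) * deriv (fun t => f (Function.update x i t)) (x i) :=
  calogero_sutherland_is_htransform_of_geometric_BM_general n Ω hΩ h hh c hc f hf
end

section
/- Let n ≥ 1, let g_1,…,g_n : ℝ → ℝ be continuous, let x_1 ≤ x_2 ≤ … ≤ x_{n+1} be real numbers, and set G_i(t) = ∫_{x_1}^t g_i(s) ds. Then ∫_{W^{n,n+1}(x)} det( g_i(y_j) )_{i,j=1}^n dy_1⋯dy_n = det A, where A is the (n+1)×(n+1) matrix with first row A_{1,j} = 1 for j = 1,…,n+1 and A_{i+1,j} = G_i(x_j) for 1 ≤ i ≤ n and 1 ≤ j ≤ n+1. -/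
/-!
On the box `∏ [x_j, x_{j+1}]` Lebesgue measure is a product measure, so expanding the
determinant by Leibniz and applying Fubini to each term gives
`det (∫_{x_j}^{x_{j+1}} g_i) = det (G_i(x_{j+1}) - G_i(x_j))`.
Subtracting from each column of `A` its left neighbour turns the first row into `(1, 0, …, 0)`
and the other rows into these increments, so expanding along the first row gives the same value.
-/

open MeasureTheory

theorem integral_det_apply_pi {ι α 𝕜 : Type*} [Fintype ι] [DecidableEq ι] [RCLike 𝕜]
    [MeasurableSpace α] (μ : ι → Measure α) [∀ j, SigmaFinite (μ j)] (g : ι → α → 𝕜)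
    (hg : ∀ i j, Integrable (g i) (μ j)) :
    ∫ y, (Matrix.of fun i j => g i (y j)).det ∂Measure.pi μ
      = (Matrix.of fun i j => ∫ s, g i s ∂μ j).det := by
  simp_rw [Matrix.det_apply, Matrix.of_apply, Units.smul_def, zsmul_eq_mul]
  rw [integral_finsetSum _ fun σ _ =>
    (Integrable.fintype_prod fun j => hg (σ j) j).const_mul _]
  refine Finset.sum_congr rfl fun σ _ => ?_
  rw [integral_const_mul, integral_fintype_prod_eq_prod]

theorem Matrix.det_cons_one_eq_det_sub {R : Type*} [CommRing R] {n : ℕ}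
    (M : Matrix (Fin n) (Fin (n + 1)) R) :
    (Matrix.of fun i j => Fin.cases (motive := fun _ => R) 1 (fun i' => M i' j) i).det
      = (Matrix.of fun i j => M i j.succ - M i j.castSucc).det := by
  set A := Matrix.of fun i j => Fin.cases (motive := fun _ => R) 1 (fun i' => M i' j) i
  rw [Matrix.det_eq_of_forall_col_eq_smul_add_pred (A := A) (B := Matrix.of fun i j =>
      Fin.cases (A i 0) (fun j' => A i j'.succ - A i j'.castSucc) j) (fun _ => 1)
      (fun i => rfl) (fun i j => by simp), Matrix.det_succ_row_zero, Fin.sum_univ_succ]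
  simp [A, Matrix.submatrix]

theorem integral_det_over_interlacing_region_general (n : ℕ)
    (g : Fin n → ℝ → ℝ) (hg : ∀ i, Continuous (g i))
    (x : Fin (n + 1) → ℝ) (hx : Monotone x) :
    ∫ y in Set.univ.pi (fun j : Fin n => Set.Icc (x j.castSucc) (x j.succ)),
        Matrix.det (Matrix.of fun i j : Fin n => g i (y j))
      = Matrix.det (Matrix.of fun i j : Fin (n + 1) =>
          Fin.cases (motive := fun _ => ℝ) 1
            (fun i' : Fin n => ∫ s in (x 0)..(x j), g i' s) i) := by
  rw [volume_pi, Measure.restrict_pi_pi,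
    integral_det_apply_pi _ g fun i _ => (hg i).integrableOn_Icc,
    Matrix.det_cons_one_eq_det_sub fun i j => ∫ s in (x 0)..(x j), g i s]
  congr 1
  ext i j
  rw [Matrix.of_apply, Matrix.of_apply,
    intervalIntegral.integral_interval_sub_left ((hg i).intervalIntegrable _ _)
      ((hg i).intervalIntegrable _ _),
    intervalIntegral.integral_of_le (hx j.castSucc_le_succ), integral_Icc_eq_integral_Ioc]

/-- Integration of a determinant over the interlacing region `W^{n,n+1}(x)`:
`∫_{W^{n,n+1}(x)} det(g_i(y_j))_{i,j=1}^n dy = det A`, where `A` is the `(n+1)×(n+1)` matrix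
whose first row is all ones and whose remaining rows are `A_{i+1,j} = G_i(x_j)` with
`G_i(t) = ∫_{x_1}^t g_i(s) ds`. -/
theorem integral_det_over_interlacing_region (n : ℕ) (hn : 1 ≤ n)
    (g : Fin n → ℝ → ℝ) (hg : ∀ i, Continuous (g i))
    (x : Fin (n + 1) → ℝ) (hx : Monotone x) :
    ∫ y in Set.univ.pi (fun j : Fin n => Set.Icc (x j.castSucc) (x j.succ)),
        Matrix.det (Matrix.of fun i j : Fin n => g i (y j))
      = Matrix.det (Matrix.of fun i j : Fin (n + 1) =>
          Fin.cases (motive := fun _ => ℝ) 1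
            (fun i' : Fin n => ∫ s in (x 0)..(x j), g i' s) i) :=
  integral_det_over_interlacing_region_general n g hg x hx
end

section
/- Let n ≥ 1, let g_1,…,g_n : ℝ → ℝ be continuous, let l ≤ x_1 ≤ x_2 ≤ … ≤ x_n be real numbers, and set G_i(t) = ∫_l^t g_i(s) ds. Then the integral of det( g_i(y_j) )_{i,j=1}^n over the region W^{n,n}(x) = { y ∈ ℝ^n : l ≤ y_1 ≤ x_1 ≤ y_2 ≤ x_2 ≤ … ≤ y_n ≤ x_n } equals det( G_i(x_j) )_{i,j=1}^n. -/
/-!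
The interlacing region is the box `∏ⱼ [x_{j-1}, x_j]` (with `x_0 = l`). Expanding the
determinant over permutations and applying Fubini to each product, the integral of
`det (g_i(y_j))` over a box is the determinant of the one-dimensional integrals
`∫_{x_{j-1}}^{x_j} g_i = G_i(x_j) - G_i(x_{j-1})`. Since `G_i(l) = 0`, subtracting from each
column of `(G_i(x_j))` the previous one turns it into this matrix of increments without changing
the determinant.
-/

open MeasureTheory

section

variable {ι 𝕜 E : Type*} [Fintype ι] [RCLike 𝕜] [MeasurableSpace E]
  {μ : ι → Measure E} [∀ j, SigmaFinite (μ j)]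

theorem setIntegral_univ_pi_prod (f : ι → E → 𝕜) (s : ι → Set E) :
    ∫ y in Set.univ.pi s, ∏ j, f j (y j) ∂Measure.pi μ = ∏ j, ∫ t in s j, f j t ∂μ j := by
  rw [Measure.restrict_pi_pi, integral_fintype_prod_eq_prod]

theorem integrableOn_univ_pi_prod {f : ι → E → 𝕜} {s : ι → Set E}
    (hf : ∀ j, IntegrableOn (f j) (s j) (μ j)) :
    IntegrableOn (fun y => ∏ j, f j (y j)) (Set.univ.pi s) (Measure.pi μ) := by
  rw [IntegrableOn, Measure.restrict_pi_pi]
  exact Integrable.fintype_prod hf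

theorem setIntegral_univ_pi_det [DecidableEq ι] (g : ι → E → 𝕜) (s : ι → Set E)
    (hg : ∀ i j, IntegrableOn (g i) (s j) (μ j)) :
    ∫ y in Set.univ.pi s, (Matrix.of fun i j => g i (y j)).det ∂Measure.pi μ
      = (Matrix.of fun i j => ∫ t in s j, g i t ∂μ j).det := by
  simp only [Matrix.det_apply', Matrix.of_apply]
  rw [integral_finsetSum _ fun σ _ =>
    (integrableOn_univ_pi_prod fun j => hg (σ j) j).const_mul _]
  simp only [integral_const_mul, setIntegral_univ_pi_prod]

end

theorem setIntegral_Icc_eq_intervalIntegral_sub {E : Type*} [NormedAddCommGroup E]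
    [NormedSpace ℝ E] {μ : Measure ℝ} [NullSingletonClass μ] {f : ℝ → E} (l : ℝ) {a b : ℝ}
    (hab : a ≤ b) (ha : IntervalIntegrable f μ l a) (hb : IntervalIntegrable f μ l b) :
    ∫ t in Set.Icc a b, f t ∂μ = (∫ t in l..b, f t ∂μ) - ∫ t in l..a, f t ∂μ := by
  rw [intervalIntegral.integral_interval_sub_left hb ha, intervalIntegral.integral_of_le hab,
    integral_Icc_eq_integral_Ioc]

/-- Integration of a determinant over the interlacing region
`W^{n,n}(x) = {y : l ≤ y_1 ≤ x_1 ≤ y_2 ≤ x_2 ≤ … ≤ y_n ≤ x_n}`: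
`∫_{W^{n,n}(x)} det(g_i(y_j))_{i,j=1}^n dy = det(G_i(x_j))_{i,j=1}^n` where
`G_i(t) = ∫_l^t g_i(s) ds`. -/
theorem integral_det_over_interlacing_region_nn (n : ℕ) (hn : 1 ≤ n)
    (g : Fin n → ℝ → ℝ) (hg : ∀ i, Continuous (g i))
    (l : ℝ) (x : Fin n → ℝ) (hlx : l ≤ x ⟨0, hn⟩) (hx : Monotone x) :
    ∫ y in Set.univ.pi (fun j : Fin n =>
        Set.Icc (Fin.cases (motive := fun _ => ℝ) l (fun i : Fin n => x i) j.castSucc) (x j)),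
        Matrix.det (Matrix.of fun i j : Fin n => g i (y j))
      = Matrix.det (Matrix.of fun i j : Fin n => ∫ s in l..(x j), g i s) := by
  obtain ⟨m, rfl⟩ := Nat.exists_eq_add_of_le' hn
  refine (setIntegral_univ_pi_det (μ := fun _ => volume) g _
    fun i j => (hg i).continuousOn.integrableOn_Icc).trans ?_
  refine (Matrix.det_eq_of_forall_col_eq_smul_add_pred (fun _ => 1) (fun i => ?_)
    fun i j => ?_).symm
  · simp only [Matrix.of_apply, Fin.castSucc_zero, Fin.cases_zero]
    rw [setIntegral_Icc_eq_intervalIntegral_sub l (b := x 0) hlx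
      ((hg i).intervalIntegrable _ _) ((hg i).intervalIntegrable _ _),
      intervalIntegral.integral_same, sub_zero]
  · simp only [Matrix.of_apply, ← Fin.succ_castSucc, Fin.cases_succ, one_mul]
    rw [setIntegral_Icc_eq_intervalIntegral_sub l (hx (Fin.castSucc_le_succ j))
      ((hg i).intervalIntegrable _ _) ((hg i).intervalIntegrable _ _), sub_add_cancel]
end

section
/- Let n ≥ 1 and let x_1 ≤ x_2 ≤ … ≤ x_{n+1} be real numbers. Then ∫_{W^{n,n+1}(x)} ∏_{1≤i<j≤n} (y_j - y_i) dy_1⋯dy_n = (1/n!) ∏_{1≤i<j≤n+1} (x_j - x_i). (This is the identity h_{n+1} = Λ_{n,n+1} h_n for the Vandermonde determinant, used in the paper's construction of Dyson Brownian motion from reflected Brownian motions.) -/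
/-!
The integrand is the Vandermonde determinant `det (y_i ^ j)`, whose `i`-th row depends on `y_i`
alone, so by multilinearity of the determinant and Fubini the integral over the box
`∏ [x_i, x_{i+1}]` is the determinant of the row-wise integrals
`∫_{x_i}^{x_{i+1}} t ^ j dt = (x_{i+1} ^ (j+1) - x_i ^ (j+1)) / (j+1)`.
The factors `1 / (j+1)` contribute `1 / n!`, and what remains is the matrix of differences of
consecutive rows of the Vandermonde matrix of `x` with its first column (of ones) removed,
whose determinant is that of the Vandermonde matrix by row reduction.
-/

open MeasureTheory

theorem Fin.prod_univ_add_one_eq_factorial (n : ℕ) :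
    ∏ i : Fin n, ((i : ℕ) + 1) = n.factorial := by
  rw [Fin.prod_univ_eq_prod_range (· + 1), Finset.prod_range_add_one_eq_factorial]

namespace Matrix

variable {R : Type*} [CommRing R]

theorem det_vandermonde_eq_prod_Iio {n : ℕ} (v : Fin n → R) :
    (vandermonde v).det = ∏ j : Fin n, ∏ i ∈ Finset.Iio j, (v j - v i) := by
  rw [det_vandermonde]
  exact Finset.prod_comm' (by simp)

theorem det_eq_det_succ_sub_castSucc {n : ℕ} (A : Matrix (Fin (n + 1)) (Fin (n + 1)) R)
    (hA : ∀ i, A i 0 = 1) :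
    A.det = (of fun i j : Fin n => A i.succ j.succ - A i.castSucc j.succ).det := by
  let B : Matrix (Fin (n + 1)) (Fin (n + 1)) R :=
    of (Fin.cases (A 0) fun i => A i.succ - A i.castSucc)
  have hB : A.det = B.det :=
    det_eq_of_forall_row_eq_smul_add_pred (fun _ => 1) (fun _ => rfl) (fun i j => by simp [B])
  rw [hB, det_succ_column_zero, Fin.sum_univ_succ, Finset.sum_eq_zero]
  · simp [B, hA]
    congr 1
  · intro i _
    simp [B, hA]

end Matrix

theorem MeasureTheory.integral_det_rowwise_eq_det_integral {ι 𝕜 E : Type*} [Fintype ι]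
    [DecidableEq ι] [RCLike 𝕜] [MeasurableSpace E] {μ : ι → Measure E} [∀ i, SigmaFinite (μ i)]
    {f : ι → ι → E → 𝕜} (hf : ∀ i j, Integrable (f i j) (μ i)) :
    ∫ y, (Matrix.of fun i j => f i j (y i)).det ∂Measure.pi μ
      = (Matrix.of fun i j => ∫ t, f i j t ∂μ i).det := by
  simp_rw [← Matrix.det_transpose (Matrix.of _), Matrix.det_apply', Matrix.transpose_apply,
    Matrix.of_apply]
  rw [integral_finsetSum _ fun σ _ => (Integrable.fintype_prod fun i => hf i (σ i)).const_mul _]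
  simp_rw [integral_const_mul, integral_fintype_prod_eq_prod]

theorem setIntegral_Icc_pow {a b : ℝ} (hab : a ≤ b) (k : ℕ) :
    ∫ t in Set.Icc a b, t ^ k = (b ^ (k + 1) - a ^ (k + 1)) / (k + 1) := by
  rw [integral_Icc_eq_integral_Ioc, ← intervalIntegral.integral_of_le hab, integral_pow]

theorem det_of_div_succ_eq_det_vandermonde_div_factorial {K : Type*} [Field K] [CharZero K]
    {n : ℕ} (x : Fin (n + 1) → K) :
    (Matrix.of fun i j : Fin n =>
        (x i.succ ^ ((j : ℕ) + 1) - x i.castSucc ^ ((j : ℕ) + 1)) / ((j : ℕ) + 1)).det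
      = (Matrix.vandermonde x).det / n.factorial := by
  have h_factorial : ∏ j : Fin n, ((j : K) + 1)⁻¹ = (n.factorial : K)⁻¹ := by
    rw [Finset.prod_inv_distrib]
    exact_mod_cast congrArg (fun m : ℕ => (m : K)⁻¹) (Fin.prod_univ_add_one_eq_factorial n)
  rw [Matrix.det_eq_det_succ_sub_castSucc _ (by simp), div_eq_inv_mul, ← h_factorial,
    ← Matrix.det_mul_row]
  congr 1
  ext i j
  simp [div_eq_inv_mul, Matrix.vandermonde_apply]

theorem vandermonde_interlacing_integral_general (n : ℕ)
    (x : Fin (n + 1) → ℝ) (hx : Monotone x) :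
    ∫ y in Set.univ.pi (fun j : Fin n => Set.Icc (x j.castSucc) (x j.succ)),
        ∏ j : Fin n, ∏ i ∈ Finset.Iio j, (y j - y i)
      = (1 / (Nat.factorial n : ℝ)) *
          ∏ j : Fin (n + 1), ∏ i ∈ Finset.Iio j, (x j - x i) := by
  simp_rw [← Matrix.det_vandermonde_eq_prod_Iio]
  calc ∫ y in Set.univ.pi (fun j : Fin n => Set.Icc (x j.castSucc) (x j.succ)),
        (Matrix.vandermonde y).det
      = (Matrix.of fun i j : Fin n =>
          ∫ t in Set.Icc (x i.castSucc) (x i.succ), t ^ (j : ℕ)).det := by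
        rw [volume_pi, Measure.restrict_pi_pi]
        exact integral_det_rowwise_eq_det_integral fun _ _ => (continuous_pow _).integrableOn_Icc
    _ = (Matrix.of fun i j : Fin n =>
          (x i.succ ^ ((j : ℕ) + 1) - x i.castSucc ^ ((j : ℕ) + 1)) / ((j : ℕ) + 1)).det := by
        simp_rw [setIntegral_Icc_pow (hx (Fin.castSucc_le_succ _))]
    _ = _ := by
        rw [det_of_div_succ_eq_det_vandermonde_div_factorial, one_div_mul_eq_div]

/-- The Vandermonde identity `h_{n+1} = Λ_{n,n+1} h_n`:
`∫_{W^{n,n+1}(x)} ∏_{1≤i<j≤n} (y_j - y_i) dy = (1/n!) ∏_{1≤i<j≤n+1} (x_j - x_i)`. -/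
theorem vandermonde_interlacing_integral (n : ℕ) (hn : 1 ≤ n)
    (x : Fin (n + 1) → ℝ) (hx : Monotone x) :
    ∫ y in Set.univ.pi (fun j : Fin n => Set.Icc (x j.castSucc) (x j.succ)),
        ∏ j : Fin n, ∏ i ∈ Finset.Iio j, (y j - y i)
      = (1 / (Nat.factorial n : ℝ)) *
          ∏ j : Fin (n + 1), ∏ i ∈ Finset.Iio j, (x j - x i) :=
  vandermonde_interlacing_integral_general n x hx
end

section
/- For every n ≥ 1 and all real numbers x_1,…,x_n, det( sin(i·x_j) )_{i,j=1}^n = 2^{n(n-1)/2} · ∏_{j=1}^n sin(x_j) · ∏_{1≤i<j≤n} ( cos(x_j) - cos(x_i) ). -/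
open Polynomial Polynomial.Chebyshev Finset

private lemma U_deg_coeff : ∀ m : ℕ,
    (U ℝ m).natDegree ≤ m ∧ (U ℝ m).coeff m = 2 ^ m := by
  have key : ∀ m : ℕ, ((U ℝ m).natDegree ≤ m ∧ (U ℝ m).coeff m = 2 ^ m) ∧
      ((U ℝ (m+1)).natDegree ≤ m+1 ∧ (U ℝ (m+1)).coeff (m+1) = 2 ^ (m+1)) := by
    intro m
    induction m with
    | zero =>
      have hU1 : (U ℝ (((0:ℕ):ℤ)+1)) = Polynomial.C 2 * X := by
        rw [show ((0:ℕ):ℤ)+1 = 1 by norm_num, U_one, map_ofNat Polynomial.C 2]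
      refine ⟨⟨?_, ?_⟩, ?_, ?_⟩
      · simp [show ((0:ℕ):ℤ) = 0 by norm_num, U_zero]
      · simp [show ((0:ℕ):ℤ) = 0 by norm_num, U_zero]
      · exact hU1 ▸ (natDegree_C_mul_le 2 X).trans (by simp)
      · rw [hU1, coeff_C_mul, coeff_X_one]; norm_num
    | succ k ih =>
      obtain ⟨⟨hd0, hc0⟩, hd, hc⟩ := ih
      have hU2 : U ℝ ((k:ℤ)+1+1) = 2 * X * U ℝ ((k:ℤ)+1) - U ℝ ((k:ℤ)) :=
        U_add_two ℝ k
      refine ⟨⟨hd, hc⟩, ?_, ?_⟩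
      · push_cast
        rw [hU2]
        refine (natDegree_sub_le _ _).trans (max_le ?_ (hd0.trans (by omega)))
        calc (2 * X * U ℝ ((k:ℤ)+1)).natDegree
            ≤ (2 * X : ℝ[X]).natDegree + (U ℝ ((k:ℤ)+1)).natDegree := natDegree_mul_le
          _ ≤ 1 + (k+1) := by
              gcongr
              · rw [(map_ofNat Polynomial.C 2).symm]
                exact (natDegree_C_mul_le 2 X).trans (by simp)
          _ = k + 2 := by omega
      · push_cast
        rw [hU2, coeff_sub, coeff_eq_zero_of_natDegree_lt (lt_of_le_of_lt hd0 (by omega)),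
          sub_zero]
        have h2X : (2 * X * U ℝ ((k:ℤ)+1)) = Polynomial.C 2 * (X * U ℝ ((k:ℤ)+1)) := by
          rw [(map_ofNat Polynomial.C 2).symm]; ring
        rw [h2X, coeff_C_mul, coeff_X_mul, hc]
        ring
  exact fun m => (key m).1

/-- `det(sin(i·x_j))_{i,j=1}^n = 2^{n(n-1)/2} · ∏_j sin(x_j) · ∏_{i<j} (cos x_j - cos x_i)`. -/
theorem det_sin_multiples (n : ℕ) (hn : 1 ≤ n) (x : Fin n → ℝ) :
    Matrix.det (Matrix.of fun i j : Fin n => Real.sin ((((i : ℕ) : ℝ) + 1) * x j))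
      = (2 : ℝ) ^ (n * (n - 1) / 2) * (∏ j : Fin n, Real.sin (x j)) *
          ∏ j : Fin n, ∏ i ∈ Finset.Iio j, (Real.cos (x j) - Real.cos (x i)) := by
  set N : Matrix (Fin n) (Fin n) ℝ :=
    Matrix.of fun i j : Fin n => (U ℝ ((j : ℕ) : ℤ)).eval (Real.cos (x i)) with hN
  -- Step 1: sin((i+1) x_j) = sin(x_j) * U_i(cos x_j)
  have step1 : (Matrix.of fun i j : Fin n => Real.sin ((((i : ℕ) : ℝ) + 1) * x j))
      = Matrix.of fun i j : Fin n =>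
          Real.sin (x j) * (U ℝ ((i : ℕ) : ℤ)).eval (Real.cos (x j)) := by
    ext i j
    have h := U_real_cos (x j) ((i : ℕ) : ℤ)
    simp only [Matrix.of_apply]
    rw [show (((i:ℕ):ℝ)+1) * x j = (((((i:ℕ):ℤ) : ℝ))+1) * x j by push_cast; ring, ← h]
    ring
  rw [step1]
  have step2 := Matrix.det_mul_column (fun j : Fin n => Real.sin (x j)) N
  have htrans : Matrix.det (Matrix.of fun i j : Fin n =>
      Real.sin (x j) * (U ℝ ((i : ℕ) : ℤ)).eval (Real.cos (x j)))
      = (∏ i : Fin n, Real.sin (x i)) * N.det := by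
    rw [← step2, ← Matrix.det_transpose]
    exact congrArg Matrix.det (by ext i j; rfl)
  rw [htrans]
  -- Step 3: Vandermonde factorization
  set p : Fin n → ℝ[X] := fun j => U ℝ ((j : ℕ) : ℤ) with hp
  have hdeg : ∀ j : Fin n, (p j).natDegree ≤ (j : ℕ) := fun j => (U_deg_coeff j).1
  have hfact := Matrix.eval_matrixOfPolynomials_eq_vandermonde_mul_matrixOfPolynomials
    (fun i : Fin n => Real.cos (x i)) p hdeg
  have hNdet : N.det
      = Matrix.det (Matrix.vandermonde fun i : Fin n => Real.cos (x i)) *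
        Matrix.det (Matrix.of fun i j : Fin n => (p j).coeff (i : ℕ)) := by
    rw [← Matrix.det_mul, ← hfact]
  rw [hNdet]
  have hcoef : Matrix.det (Matrix.of fun i j : Fin n => (p j).coeff (i : ℕ))
      = (2 : ℝ) ^ (n * (n - 1) / 2) := by
    rw [Matrix.det_of_upperTriangular (Matrix.matrixOfPolynomials_blockTriangular p hdeg)]
    have hdiag : ∀ i : Fin n, (Matrix.of fun i j : Fin n => (p j).coeff (i : ℕ)) i i
        = (2 : ℝ) ^ (i : ℕ) := fun i => (U_deg_coeff i).2
    rw [Finset.prod_congr rfl (fun i _ => hdiag i), Finset.prod_pow_eq_pow_sum]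
    congr 1
    rw [← Finset.sum_range_id n, ← Fin.sum_univ_eq_sum_range]
  rw [hcoef, Matrix.det_vandermonde]
  have hv : (∏ i : Fin n, ∏ j ∈ Finset.Ioi i, (Real.cos (x j) - Real.cos (x i)))
      = ∏ j : Fin n, ∏ i ∈ Finset.Iio j, (Real.cos (x j) - Real.cos (x i)) := by
    rw [Finset.prod_comm' (t' := Finset.univ) (s' := fun j => Finset.Iio j)
      (fun i j => by simp [Finset.mem_Ioi, Finset.mem_Iio])]
  rw [hv]
  ring
end

section
/- Let n ≥ 1 and let x_1 ≤ x_2 ≤ … ≤ x_{n+1} be real numbers. Then ∫_{W^{n,n+1}(x)} det( sin(i·y_j) )_{i,j=1}^n dy_1⋯dy_n = ((-1)^n/n!) · det( cos((i-1)·x_j) )_{i,j=1}^{n+1}. (This is, up to a constant, the paper's identity h_{n+1} = Λ_{n,n+1} Π_{n,n+1} ĥ_n for Brownian motions in an interval.) -/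
/-!
Expanding the determinant, each term is a product of functions of one coordinate each, so its
integral over the box `∏ [x_j, x_{j+1}]` factorises: the integral of the determinant is the
determinant of the one-dimensional integrals `∫_{x_j}^{x_{j+1}} sin(i t) dt
= (cos(i x_j) - cos(i x_{j+1})) / i`. Pulling out the factors `1/i` gives `1/n!`, and the
remaining matrix of differences is what the column operations `C_{j+1} - C_j` leave of the
cosine matrix, whose first row is all ones.
-/

open MeasureTheory

namespace Matrix

variable {R : Type*} [CommRing R]

theorem det_eq_det_sub_of_row_zero_eq_one {n : ℕ} (M : Matrix (Fin (n + 1)) (Fin (n + 1)) R)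
    (hM : ∀ j, M 0 j = 1) :
    M.det = (of fun i j : Fin n => M i.succ j.succ - M i.succ j.castSucc).det := by
  set B : Matrix (Fin (n + 1)) (Fin (n + 1)) R :=
    of fun i j => Fin.cases (M i 0) (fun k => M i k.succ - M i k.castSucc) j
  have hB : M.det = B.det :=
    det_eq_of_forall_col_eq_smul_add_pred (fun _ => 1) (fun _ => rfl) fun i j => by simp [B]
  rw [hB, det_succ_row_zero, Fin.sum_univ_succ, Finset.sum_eq_zero fun j _ => by simp [B, hM]]
  simp [B, hM, submatrix]

end Matrix

theorem integral_det_eq_det_integral {ι α 𝕜 : Type*} [Fintype ι] [DecidableEq ι]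
    [MeasurableSpace α] [RCLike 𝕜] {μ : ι → Measure α} [∀ j, SigmaFinite (μ j)]
    (f : ι → ι → α → 𝕜) (hf : ∀ i j, Integrable (f i j) (μ j)) :
    ∫ y, (Matrix.of fun i j => f i j (y j)).det ∂Measure.pi μ
      = (Matrix.of fun i j => ∫ t, f i j t ∂μ j).det := by
  simp only [Matrix.det_apply', Matrix.of_apply]
  rw [integral_finsetSum _ fun σ _ => (Integrable.fintype_prod fun j => hf (σ j) j).const_mul _]
  simp_rw [integral_const_mul, integral_fintype_prod_eq_prod]

theorem setIntegral_univ_pi_det_eq_det_setIntegral {ι α 𝕜 : Type*} [Fintype ι] [DecidableEq ι]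
    [MeasurableSpace α] [RCLike 𝕜] {μ : ι → Measure α} [∀ j, SigmaFinite (μ j)]
    (s : ι → Set α) (f : ι → ι → α → 𝕜) (hf : ∀ i j, IntegrableOn (f i j) (s j) (μ j)) :
    ∫ y in Set.univ.pi s, (Matrix.of fun i j => f i j (y j)).det ∂Measure.pi μ
      = (Matrix.of fun i j => ∫ t in s j, f i j t ∂μ j).det := by
  rw [Measure.restrict_pi_pi, integral_det_eq_det_integral f hf]

theorem integral_Icc_sin_const_mul {a b c : ℝ} (hab : a ≤ b) (hc : c ≠ 0) :
    ∫ t in Set.Icc a b, Real.sin (c * t) = (Real.cos (c * a) - Real.cos (c * b)) / c := by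
  rw [integral_Icc_eq_integral_Ioc, ← intervalIntegral.integral_of_le hab,
    intervalIntegral.integral_comp_mul_left _ hc, integral_sin, smul_eq_mul]
  ring

theorem integral_det_sin_over_interlacing_region_general (n : ℕ)
    (x : Fin (n + 1) → ℝ) (hx : Monotone x) :
    ∫ y in Set.univ.pi (fun j : Fin n => Set.Icc (x j.castSucc) (x j.succ)),
        Matrix.det (Matrix.of fun i j : Fin n => Real.sin ((((i : ℕ) : ℝ) + 1) * y j))
      = ((-1 : ℝ) ^ n / (Nat.factorial n : ℝ)) *
          Matrix.det (Matrix.of fun i j : Fin (n + 1) => Real.cos (((i : ℕ) : ℝ) * x j)) := by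
  set C := Matrix.of fun i j : Fin (n + 1) => Real.cos (((i : ℕ) : ℝ) * x j)
  set D := Matrix.of fun i j : Fin n => C i.succ j.succ - C i.succ j.castSucc
  have hentry (i j : Fin n) :
      ∫ t in Set.Icc (x j.castSucc) (x j.succ), Real.sin (((i : ℕ) + 1 : ℝ) * t)
        = ((i : ℕ) + 1 : ℝ)⁻¹ * (-D) i j := by
    rw [integral_Icc_sin_const_mul (hx (Fin.castSucc_le_succ j)) (by positivity)]
    simp only [D, C, Matrix.neg_apply, Matrix.of_apply, Fin.val_succ]
    push_cast
    ring
  have hfactorial : ∏ i : Fin n, ((i : ℕ) + 1 : ℝ)⁻¹ = (n.factorial : ℝ)⁻¹ := by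
    simp [Finset.prod_inv_distrib, ← Finset.prod_range_add_one_eq_factorial,
      Fin.prod_univ_eq_prod_range (fun i => (i : ℝ) + 1)]
  rw [volume_pi, setIntegral_univ_pi_det_eq_det_setIntegral _
      (fun (i _ : Fin n) t => Real.sin (((i : ℕ) + 1 : ℝ) * t))
      fun i j => (by fun_prop : Continuous _).integrableOn_Icc]
  simp_rw [hentry]
  rw [Matrix.det_mul_column, Matrix.det_neg, hfactorial, Fintype.card_fin,
    Matrix.det_eq_det_sub_of_row_zero_eq_one C fun j => by simp [C]]
  ring

/-- The identity `h_{n+1} = Λ_{n,n+1} Π_{n,n+1} ĥ_n` for Brownian motions in an interval: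
`∫_{W^{n,n+1}(x)} det(sin(i·y_j))_{i,j=1}^n dy = ((-1)^n/n!) · det(cos((i-1)·x_j))_{i,j=1}^{n+1}`. -/
theorem integral_det_sin_over_interlacing_region (n : ℕ) (hn : 1 ≤ n)
    (x : Fin (n + 1) → ℝ) (hx : Monotone x) :
    ∫ y in Set.univ.pi (fun j : Fin n => Set.Icc (x j.castSucc) (x j.succ)),
        Matrix.det (Matrix.of fun i j : Fin n => Real.sin ((((i : ℕ) : ℝ) + 1) * y j))
      = ((-1 : ℝ) ^ n / (Nat.factorial n : ℝ)) *
          Matrix.det (Matrix.of fun i j : Fin (n + 1) => Real.cos (((i : ℕ) : ℝ) * x j)) :=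
  integral_det_sin_over_interlacing_region_general n x hx
end

section
/- Let n ≥ 1, t > 0, λ : ℕ → ℝ, and φ_k : ℝ → ℝ for k ∈ ℕ. Let x_1,…,x_n and y_1,…,y_n be real numbers and assume Σ_k e^{-λ_k t} |φ_k(x_i)| |φ_k(y_j)| < ∞ for all i,j, so that q_t(x_i,y_j) := Σ_k e^{-λ_k t} φ_k(x_i) φ_k(y_j) converges absolutely. Then det( q_t(x_i,y_j) )_{i,j=1}^n = Σ_{k_1 < k_2 < … < k_n} e^{-(λ_{k_1}+…+λ_{k_n}) t} · det( φ_{k_i}(x_j) )_{i,j=1}^n · det( φ_{k_i}(y_j) )_{i,j=1}^n, where the sum ranges over strictly increasing n-tuples of natural numbers and converges absolutely. -/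
open scoped BigOperators

set_option maxHeartbeats 2000000

/-- Interchange of a finite product and infinite sums, under absolute summability. -/
private theorem km_prod_tsum (n : ℕ) : ∀ {ι : Type} (f : Fin n → ι → ℝ),
    (∀ i, Summable fun k => |f i k|) →
    Summable (fun k : Fin n → ι => |∏ i, f i (k i)|) ∧
    (∏ i, ∑' κ, f i κ) = ∑' k : Fin n → ι, ∏ i, f i (k i) := by
  induction n with
  | zero =>
    intro ι f _
    refine ⟨Summable.of_finite, ?_⟩
    rw [tsum_eq_single (fun i => i.elim0) (fun b hb => absurd (Subsingleton.elim b _) hb)]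
    simp
  | succ n IH =>
    intro ι f hf
    obtain ⟨hs, he⟩ := IH (fun i => f i.succ) (fun i => hf _)
    let e : ι × (Fin n → ι) ≃ (Fin (n+1) → ι) := Fin.consEquiv fun _ => ι
    have key : ∀ p : ι × (Fin n → ι),
        (∏ i, f i (e p i)) = f 0 p.1 * ∏ i, f i.succ (p.2 i) := by
      intro p
      rw [Fin.prod_univ_succ]
      simp only [e, Fin.consEquiv, Equiv.coe_fn_mk, Fin.cons_zero, Fin.cons_succ]
    have hs1 : Summable fun p : ι × (Fin n → ι) => |f 0 p.1| * |∏ i, f i.succ (p.2 i)| :=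
      (hf 0).mul_of_nonneg hs (fun _ => abs_nonneg _) (fun _ => abs_nonneg _)
    have hs2 : Summable fun p : ι × (Fin n → ι) => |∏ i, f i (e p i)| := by
      refine hs1.congr fun p => ?_
      rw [key, abs_mul]
    constructor
    · exact (e.summable_iff (f := fun k : Fin (n+1) → ι => |∏ i, f i (k i)|)).mp hs2
    · rw [Fin.prod_univ_succ, he,
        tsum_mul_tsum_of_summable_norm
          ((hf 0).congr fun κ => (Real.norm_eq_abs _).symm)
          (hs.congr fun c => (Real.norm_eq_abs _).symm),
        ← e.tsum_eq (fun k : Fin (n+1) → ι => ∏ i, f i (k i))]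
      exact tsum_congr fun p => (key p).symm

private theorem km_comp_injective (n : ℕ) :
    Function.Injective
      (fun p : {f : Fin n → ℕ // StrictMono f} × Equiv.Perm (Fin n) => p.1.1 ∘ p.2) := by
  rintro ⟨⟨m₁, h₁⟩, σ₁⟩ ⟨⟨m₂, h₂⟩, σ₂⟩ h
  simp only at h
  have hm : m₁ = m₂ := by
    classical
    set s : Finset ℕ := Finset.image m₂ Finset.univ with hs
    have hcard : s.card = n := by
      rw [hs, Finset.card_image_of_injective _ h₂.injective, Finset.card_univ,
        Fintype.card_fin]
    have hmem2 : ∀ i, m₂ i ∈ s := fun i => Finset.mem_image_of_mem _ (Finset.mem_univ i)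
    have hmem1 : ∀ i, m₁ i ∈ s := by
      intro i
      have h' : m₁ i = m₂ (σ₂ (σ₁.symm i)) := by
        have := congrFun h (σ₁.symm i)
        simpa using this
      rw [h']
      exact hmem2 _
    rw [Finset.orderEmbOfFin_unique hcard hmem1 h₁,
      Finset.orderEmbOfFin_unique hcard hmem2 h₂]
  subst hm
  have hσ : σ₁ = σ₂ := Equiv.ext fun i => h₁.injective (congrFun h i)
  rw [hσ]

private theorem km_comp_surj (n : ℕ) (f : Fin n → ℕ) (hf : Function.Injective f) :
    ∃ (m : {g : Fin n → ℕ // StrictMono g}) (σ : Equiv.Perm (Fin n)), m.1 ∘ σ = f := by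
  classical
  set s : Finset ℕ := Finset.image f Finset.univ with hs
  have hcard : s.card = n := by
    rw [hs, Finset.card_image_of_injective _ hf, Finset.card_univ, Fintype.card_fin]
  have hmem : ∀ i, f i ∈ s := fun i => Finset.mem_image_of_mem f (Finset.mem_univ i)
  set σ₀ : Fin n → Fin n := fun i => (s.orderIsoOfFin hcard).symm ⟨f i, hmem i⟩ with hσ₀
  have hinj : Function.Injective σ₀ := by
    intro a b hab
    apply hf
    have := congrArg (fun z => ((s.orderIsoOfFin hcard) z : ℕ)) hab
    simpa [hσ₀] using this
  refine ⟨⟨fun i => s.orderEmbOfFin hcard i, (s.orderEmbOfFin hcard).strictMono⟩,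
    Equiv.ofBijective σ₀ (Finite.injective_iff_bijective.mp hinj), ?_⟩
  funext i
  show s.orderEmbOfFin hcard (σ₀ i) = f i
  rw [← Finset.coe_orderIsoOfFin_apply]
  simp [hσ₀]

/-- Spectral expansion of the Karlin–McGregor determinant: if
`q_t(x_i,y_j) = Σ_k e^{-λ_k t} φ_k(x_i) φ_k(y_j)` converges absolutely, then
`det(q_t(x_i,y_j))_{i,j=1}^n = Σ_{k_1<…<k_n} e^{-(λ_{k_1}+…+λ_{k_n})t}
  det(φ_{k_i}(x_j)) det(φ_{k_i}(y_j))`, the sum over strictly increasing `n`-tuples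
converging absolutely. -/
theorem karlin_mcgregor_spectral_expansion (n : ℕ) (hn : 1 ≤ n)
    (t : ℝ) (ht : 0 < t) (lam : ℕ → ℝ) (φ : ℕ → ℝ → ℝ)
    (x y : Fin n → ℝ)
    (hsum : ∀ i j : Fin n,
      Summable fun k : ℕ => Real.exp (-(lam k) * t) * |φ k (x i)| * |φ k (y j)|) :
    Summable (fun k : {f : Fin n → ℕ // StrictMono f} =>
      |Real.exp (-(∑ i : Fin n, lam (k.1 i)) * t) *
        Matrix.det (Matrix.of fun i j : Fin n => φ (k.1 i) (x j)) *
        Matrix.det (Matrix.of fun i j : Fin n => φ (k.1 i) (y j))|) ∧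
    Matrix.det (Matrix.of fun i j : Fin n =>
        ∑' k : ℕ, Real.exp (-(lam k) * t) * φ k (x i) * φ k (y j))
      = ∑' k : {f : Fin n → ℕ // StrictMono f},
          Real.exp (-(∑ i : Fin n, lam (k.1 i)) * t) *
            Matrix.det (Matrix.of fun i j : Fin n => φ (k.1 i) (x j)) *
            Matrix.det (Matrix.of fun i j : Fin n => φ (k.1 i) (y j)) := by
  classical
  set c : ℕ → ℝ := fun κ => Real.exp (-(lam κ) * t) with hc
  have hcpos : ∀ κ, 0 < c κ := fun κ => Real.exp_pos _
  set A : ℕ → Fin n → Fin n → ℝ := fun κ i j => c κ * φ κ (x i) * φ κ (y j) with hA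
  have hAabs : ∀ i j, Summable fun κ => |A κ i j| := by
    intro i j
    refine (hsum i j).congr fun κ => ?_
    simp only [hA, hc, abs_mul, abs_of_pos (Real.exp_pos (-(lam κ) * t))]
  have hPσ : ∀ σ : Equiv.Perm (Fin n),
      Summable (fun k : Fin n → ℕ => |∏ i, A (k i) (σ i) i|) ∧
      (∏ i, ∑' κ, A κ (σ i) i) = ∑' k : Fin n → ℕ, ∏ i, A (k i) (σ i) i :=
    fun σ => km_prod_tsum n (fun i κ => A κ (σ i) i) (fun i => hAabs (σ i) i)
  set G : (Fin n → ℕ) → ℝ := fun k =>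
    (∏ i, (c (k i) * φ (k i) (y i))) *
      Matrix.det (Matrix.of fun i j : Fin n => φ (k j) (x i)) with hG
  have hGsum_eq : ∀ k, G k = ∑ σ : Equiv.Perm (Fin n),
      ((Equiv.Perm.sign σ : ℤ) : ℝ) * ∏ i, A (k i) (σ i) i := by
    intro k
    simp only [hG]
    rw [Matrix.det_apply', Finset.mul_sum]
    refine Finset.sum_congr rfl fun σ _ => ?_
    have h1 : ∏ i, A (k i) (σ i) i
        = (∏ i, (c (k i) * φ (k i) (y i))) * ∏ i, φ (k i) (x (σ i)) := by
      rw [← Finset.prod_mul_distrib]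
      exact Finset.prod_congr rfl fun i _ => by rw [hA]; ring
    rw [h1]
    simp only [Matrix.of_apply]
    ring
  have hGabs : Summable fun k => |G k| := by
    have hbound : ∀ k, |G k| ≤ ∑ σ : Equiv.Perm (Fin n), |∏ i, A (k i) (σ i) i| := by
      intro k
      rw [hGsum_eq k]
      refine (Finset.abs_sum_le_sum_abs _ _).trans ?_
      refine Finset.sum_le_sum fun σ _ => ?_
      rw [abs_mul]
      rcases Int.units_eq_one_or (Equiv.Perm.sign σ) with h | h <;> simp [h]
    refine Summable.of_nonneg_of_le (fun k => abs_nonneg _) hbound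
      (summable_sum fun σ _ => ?_)
    exact (hPσ σ).1
  have hGsummable : Summable G := hGabs.of_abs
  have hdet : Matrix.det (Matrix.of fun i j : Fin n =>
      ∑' κ : ℕ, Real.exp (-(lam κ) * t) * φ κ (x i) * φ κ (y j)) = ∑' k, G k := by
    rw [Matrix.det_apply']
    have h2 : ∀ σ : Equiv.Perm (Fin n),
        (∏ i, (Matrix.of fun i j : Fin n =>
          ∑' κ : ℕ, Real.exp (-(lam κ) * t) * φ κ (x i) * φ κ (y j)) (σ i) i)
          = ∑' k : Fin n → ℕ, ∏ i, A (k i) (σ i) i := by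
      intro σ
      rw [← (hPσ σ).2]
      exact Finset.prod_congr rfl fun i _ => by simp [hA, hc]
    calc (∑ σ : Equiv.Perm (Fin n), ((Equiv.Perm.sign σ : ℤ) : ℝ) *
            ∏ i, (Matrix.of fun i j : Fin n =>
              ∑' κ : ℕ, Real.exp (-(lam κ) * t) * φ κ (x i) * φ κ (y j)) (σ i) i)
        = ∑ σ : Equiv.Perm (Fin n), ∑' k : Fin n → ℕ,
            ((Equiv.Perm.sign σ : ℤ) : ℝ) * ∏ i, A (k i) (σ i) i := by
          refine Finset.sum_congr rfl fun σ _ => ?_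
          rw [h2 σ, tsum_mul_left]
      _ = ∑' k : Fin n → ℕ, ∑ σ : Equiv.Perm (Fin n),
            ((Equiv.Perm.sign σ : ℤ) : ℝ) * ∏ i, A (k i) (σ i) i :=
          (Summable.tsum_finsetSum fun σ _ => ((hPσ σ).1.of_abs.mul_left _)).symm
      _ = ∑' k, G k := tsum_congr fun k => (hGsum_eq k).symm
  have hGsupp : ∀ k, ¬ Function.Injective k → G k = 0 := by
    intro k hk
    simp only [hG]
    simp only [Function.Injective, not_forall] at hk
    obtain ⟨i, j, hij, hne⟩ := hk
    rw [Matrix.det_zero_of_column_eq hne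
      (fun a => by simp only [Matrix.of_apply]; rw [hij]), mul_zero]
  set emap : {f : Fin n → ℕ // StrictMono f} × Equiv.Perm (Fin n) → (Fin n → ℕ) :=
    fun p => p.1.1 ∘ p.2 with hemap
  have hinj : Function.Injective emap := km_comp_injective n
  have hrange : ∀ k, k ∉ Set.range emap → G k = 0 := by
    intro k hk
    refine hGsupp k fun h => hk ?_
    obtain ⟨m, σ, hmσ⟩ := km_comp_surj n k h
    exact ⟨(m, σ), hmσ⟩
  have hGcomp : Summable (G ∘ emap) :=
    (hinj.summable_iff hrange).mpr hGsummable
  have hGcompabs : Summable ((fun k => |G k|) ∘ emap) :=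
    (hinj.summable_iff (fun k hk => by simp [hrange k hk])).mpr hGabs
  have htsum_e : ∑' k, G k = ∑' p, G (emap p) :=
    (hinj.tsum_eq (by
      intro k hk
      by_contra hkr
      exact hk (hrange k fun hr => hkr (Set.mem_range.mp hr)))).symm
  have hinner : ∀ m : {f : Fin n → ℕ // StrictMono f},
      (∑ σ : Equiv.Perm (Fin n), G (m.1 ∘ σ))
        = Real.exp (-(∑ i : Fin n, lam (m.1 i)) * t) *
            Matrix.det (Matrix.of fun i j : Fin n => φ (m.1 i) (x j)) *
            Matrix.det (Matrix.of fun i j : Fin n => φ (m.1 i) (y j)) := by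
    intro m
    have hcprod : (∏ i, c (m.1 i)) = Real.exp (-(∑ i : Fin n, lam (m.1 i)) * t) := by
      rw [hc, ← Real.exp_sum]
      congr 1
      rw [← Finset.sum_neg_distrib, Finset.sum_mul]
    have hdetx : Matrix.det (Matrix.of fun i j : Fin n => φ (m.1 j) (x i))
        = Matrix.det (Matrix.of fun i j : Fin n => φ (m.1 i) (x j)) :=
      Matrix.det_transpose (Matrix.of fun i j : Fin n => φ (m.1 i) (x j))
    have hterm : ∀ σ : Equiv.Perm (Fin n), G (m.1 ∘ σ)
        = ((∏ i, c (m.1 i)) * Matrix.det (Matrix.of fun i j : Fin n => φ (m.1 i) (x j))) *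
          (((Equiv.Perm.sign σ : ℤ) : ℝ) * ∏ i, φ (m.1 (σ i)) (y i)) := by
      intro σ
      simp only [hG]
      have hC : (∏ i, (c ((m.1 ∘ σ) i) * φ ((m.1 ∘ σ) i) (y i)))
          = (∏ i, c (m.1 i)) * ∏ i, φ (m.1 (σ i)) (y i) := by
        rw [Finset.prod_mul_distrib]
        congr 1
        exact Equiv.prod_comp σ (fun i => c (m.1 i))
      have hD : Matrix.det (Matrix.of fun i j : Fin n => φ ((m.1 ∘ σ) j) (x i))
          = ((Equiv.Perm.sign σ : ℤ) : ℝ) *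
              Matrix.det (Matrix.of fun i j : Fin n => φ (m.1 j) (x i)) := by
        have hsub : (Matrix.of fun i j : Fin n => φ ((m.1 ∘ σ) j) (x i))
            = (Matrix.of fun i j : Fin n => φ (m.1 j) (x i)).submatrix id σ := rfl
        rw [hsub, Matrix.det_permute']
      rw [hC, hD, hdetx]
      ring
    rw [Finset.sum_congr rfl fun σ _ => hterm σ, ← Finset.mul_sum, hcprod]
    have hdety : (∑ σ : Equiv.Perm (Fin n),
        ((Equiv.Perm.sign σ : ℤ) : ℝ) * ∏ i, φ (m.1 (σ i)) (y i))
        = Matrix.det (Matrix.of fun i j : Fin n => φ (m.1 i) (y j)) := by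
      rw [Matrix.det_apply']
      exact Finset.sum_congr rfl fun σ _ => by simp [Matrix.of_apply]
    rw [hdety]
  constructor
  · have hsummand : ∀ σ : Equiv.Perm (Fin n),
        Summable (fun m : {f : Fin n → ℕ // StrictMono f} => |G (emap (m, σ))|) := by
      intro σ
      exact hGcompabs.comp_injective
        (fun a b hab => by simpa using congrArg Prod.fst hab)
    refine Summable.of_nonneg_of_le (fun m => abs_nonneg _)
      (fun m => ?_) (summable_sum (s := Finset.univ) fun σ _ => hsummand σ)
    rw [← hinner m]
    exact Finset.abs_sum_le_sum_abs _ _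
  · have hGcomp' : Summable fun p : {f : Fin n → ℕ // StrictMono f} × Equiv.Perm (Fin n) =>
        G (emap p) := hGcomp
    rw [hdet, htsum_e, Summable.tsum_prod' hGcomp' (fun m => Summable.of_finite)]
    refine tsum_congr fun m => ?_
    rw [tsum_fintype]
    exact hinner m
end

section
/- Let n ≥ 1, a ∈ ℝ, and let f_1,…,f_n be (n-1)-times continuously differentiable real functions on a neighborhood of a. Then, as (x_1,…,x_n) tends to (a,…,a) through n-tuples with pairwise distinct entries, the ratio det( f_j(x_i) )_{i,j=1}^n / ∏_{1≤i<j≤n} (x_j - x_i) converges to det( f_j^{(i-1)}(a) )_{i,j=1}^n / ∏_{k=1}^{n-1} k!. -/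
/-!
Left multiplication by a lower-triangular matrix of determinant `1 / ∏_{i<j} (x_j - x_i)` turns
the row `i` of `(f_j(x_i))` into the divided differences `f_j[x_0, …, x_i]`. Applying Rolle's
theorem `i` times to `f_j` minus its interpolating polynomial at `x_0, …, x_i` gives
`f_j[x_0, …, x_i] = f_j^{(i)}(ξ) / i!` for some `ξ` in any interval around `a` containing the nodes,
so these entries tend to `f_j^{(i)}(a) / i!` and the determinant follows by continuity.
-/

open Filter Topology Polynomial Finset

def divDiff {K ι : Type*} [Field K] [DecidableEq ι] (f : K → K) (s : Finset ι) (v : ι → K) : K :=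
  ∑ i ∈ s, f (v i) / ∏ j ∈ s.erase i, (v i - v j)

theorem divDiff_congr {K ι : Type*} [Field K] [DecidableEq ι] {f g : K → K} {s : Finset ι}
    {v : ι → K} (h : ∀ i ∈ s, f (v i) = g (v i)) : divDiff f s v = divDiff g s v :=
  sum_congr rfl fun i hi => by rw [h i hi]

theorem det_div_prod_sub_eq_det_divDiff {K : Type*} [Field K] {n : ℕ} (f : Fin n → K → K)
    (x : Fin n → K) :
    Matrix.det (Matrix.of fun i j => f j (x i)) / ∏ j, ∏ i ∈ Iio j, (x j - x i) =
      Matrix.det (Matrix.of fun i j => divDiff (f j) (Iic i) x) := by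
  set L : Matrix (Fin n) (Fin n) K :=
    Matrix.of fun i k => if k ≤ i then (∏ l ∈ (Iic i).erase k, (x k - x l))⁻¹ else 0
  have hL : L.IsLowerTriangular := fun i k hik => if_neg (not_le.2 hik)
  have hdetL : L.det = (∏ j, ∏ i ∈ Iio j, (x j - x i))⁻¹ := by
    simp [Matrix.det_of_isLowerTriangular L hL, L, Iic_erase, prod_inv_distrib]
  have hLF : L * Matrix.of (fun i j => f j (x i)) =
      Matrix.of fun i j => divDiff (f j) (Iic i) x := by
    ext i j
    simp only [Matrix.mul_apply, Matrix.of_apply, L, ite_mul, zero_mul, divDiff, div_eq_inv_mul]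
    rw [← sum_filter]
    congr 1
    ext k
    simp
  rw [← hLF, Matrix.det_mul, hdetL, div_eq_inv_mul]

theorem iteratedDeriv_polynomial_eval {𝕜 : Type*} [NontriviallyNormedField 𝕜] (m : ℕ) (p : 𝕜[X]) :
    iteratedDeriv m (fun x => p.eval x) = fun x => (derivative^[m] p).eval x := by
  induction m generalizing p with
  | zero => rfl
  | succ m ih =>
    rw [iteratedDeriv_succ', Function.iterate_succ_apply, ← ih]
    exact congrArg _ (funext fun x => p.deriv)

theorem iteratedDeriv_polynomial_eval_eq_factorial_mul_divDiff {𝕜 ι : Type*}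
    [NontriviallyNormedField 𝕜] [DecidableEq ι] {s : Finset ι} {v : ι → 𝕜}
    (hv : Set.InjOn v s) {m : ℕ} (hs : #s = m + 1) {P : 𝕜[X]} (hP : P.degree < #s) (x : 𝕜) :
    iteratedDeriv m (fun y => P.eval y) x = m.factorial * divDiff (fun y => P.eval y) s v := by
  simp only [iteratedDeriv_polynomial_eval]
  rw [Lagrange.eval_iterate_derivative_eq_sum hv hP (by omega)]
  simp [hs, divDiff]

theorem exists_strictMono_deriv_eq_zero {U : Set ℝ} (hU : U.OrdConnected) {g : ℝ → ℝ}
    (hg : DifferentiableOn ℝ g U) {k : ℕ} {y : Fin (k + 2) → ℝ} (hy : StrictMono y)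
    (hyU : ∀ j, y j ∈ U) (hgy : ∀ j, g (y j) = 0) :
    ∃ c : Fin (k + 1) → ℝ, StrictMono c ∧ (∀ j, c j ∈ U) ∧ ∀ j, deriv g (c j) = 0 := by
  have hrolle : ∀ j : Fin (k + 1), ∃ c ∈ Set.Ioo (y j.castSucc) (y j.succ), deriv g c = 0 :=
    fun j => exists_deriv_eq_zero (hy Fin.castSucc_lt_succ)
      (hg.continuousOn.mono (hU.out (hyU _) (hyU _))) (by rw [hgy, hgy])
  choose c hcy hc using hrolle
  refine ⟨c, Fin.strictMono_iff_lt_succ.2 fun j => ?_, fun j => ?_, hc⟩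
  · calc c j.castSucc < y j.castSucc.succ := (hcy _).2
      _ = y j.succ.castSucc := by rw [Fin.succ_castSucc]
      _ < c j.succ := (hcy _).1
  · exact hU.out (hyU _) (hyU _) (Set.Ioo_subset_Icc_self (hcy j))

theorem exists_iteratedDeriv_eq_zero_of_strictMono {U : Set ℝ} (hUo : IsOpen U)
    (hU : U.OrdConnected) {k : ℕ} {g : ℝ → ℝ} (hg : ContDiffOn ℝ k g U)
    {y : Fin (k + 1) → ℝ} (hy : StrictMono y) (hyU : ∀ j, y j ∈ U) (hgy : ∀ j, g (y j) = 0) :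
    ∃ ξ ∈ U, iteratedDeriv k g ξ = 0 := by
  induction k generalizing g with
  | zero => exact ⟨y 0, hyU 0, by simpa using hgy 0⟩
  | succ k ih =>
    obtain ⟨c, hc, hcU, hgc⟩ :=
      exists_strictMono_deriv_eq_zero hU (hg.differentiableOn (by simp)) hy hyU hgy
    rw [iteratedDeriv_succ']
    exact ih (hg.deriv_of_isOpen hUo (by simp)) hc hcU hgc

theorem exists_divDiff_eq_iteratedDeriv_div_factorial {ι : Type*} [DecidableEq ι] {U : Set ℝ}
    (hUo : IsOpen U) (hU : U.OrdConnected) {m : ℕ} {f : ℝ → ℝ} (hf : ContDiffOn ℝ m f U)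
    {s : Finset ι} (hs : #s = m + 1) {v : ι → ℝ} (hv : Set.InjOn v s) (hvU : ∀ i ∈ s, v i ∈ U) :
    ∃ ξ ∈ U, divDiff f s v = iteratedDeriv m f ξ / m.factorial := by
  set P := Lagrange.interpolate s v (fun i => f (v i))
  have hPv : ∀ i ∈ s, P.eval (v i) = f (v i) := fun i hi =>
    Lagrange.eval_interpolate_at_node _ hv hi
  have hP : ContDiffOn ℝ m (fun x => P.eval x) U := by
    simpa using (P.contDiff_aeval (𝕜 := ℝ) m).contDiffOn
  have hnodes : #(s.image v) = m + 1 := by rw [card_image_of_injOn hv, hs]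
  set y := (s.image v).orderEmbOfFin hnodes
  have hy : ∀ j, ∃ i ∈ s, v i = y j := fun j => mem_image.1 (orderEmbOfFin_mem _ hnodes j)
  obtain ⟨ξ, hξU, hξ⟩ := exists_iteratedDeriv_eq_zero_of_strictMono hUo hU (hf.sub hP)
    y.strictMono (fun j => by obtain ⟨i, hi, hij⟩ := hy j; exact hij ▸ hvU i hi)
    (fun j => by obtain ⟨i, hi, hij⟩ := hy j; simp [← hij, hPv i hi])
  have hfξ : iteratedDeriv m f ξ = m.factorial * divDiff f s v := by
    rw [iteratedDeriv_fun_sub (hf.contDiffAt (hUo.mem_nhds hξU)) (hP.contDiffAt (hUo.mem_nhds hξU)),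
      sub_eq_zero, iteratedDeriv_polynomial_eval_eq_factorial_mul_divDiff hv hs
        (Lagrange.degree_interpolate_lt _ hv)] at hξ
    rw [hξ, divDiff_congr (f := fun x => P.eval x) hPv]
  refine ⟨ξ, hξU, ?_⟩
  rw [hfξ]
  field_simp

theorem tendsto_divDiff {ι : Type*} [Fintype ι] [DecidableEq ι] {s : Finset ι} {m : ℕ}
    (hs : #s = m + 1) {f : ℝ → ℝ} {a : ℝ} (hf : ContDiffAt ℝ m f a) :
    Tendsto (divDiff f s) (𝓝[{x | Function.Injective x}] fun _ => a)
      (𝓝 (iteratedDeriv m f a / m.factorial)) := by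
  have hcont : ContinuousAt (fun y => iteratedDeriv m f y / m.factorial) a := by
    rw [iteratedDeriv_eq_equiv_comp]
    exact ((ContinuousMultilinearMap.piFieldEquiv ℝ (Fin m) ℝ).symm.continuous.continuousAt.comp
      (hf.continuousAt_iteratedFDeriv le_rfl)).div_const _
  rw [Metric.tendsto_nhds]
  intro ε hε
  obtain ⟨δ, hδ, hball⟩ := Metric.eventually_nhds_iff_ball.1
    ((hf.eventually (by simp)).and (hcont.eventually (Metric.ball_mem_nhds _ hε)))
  filter_upwards [self_mem_nhdsWithin, nhdsWithin_le_nhds (Metric.ball_mem_nhds _ hδ)]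
    with x hx hxa
  obtain ⟨ξ, hξ, hdivDiff⟩ := exists_divDiff_eq_iteratedDeriv_div_factorial Metric.isOpen_ball
    (convex_ball a δ).ordConnected (fun y hy => (hball y hy).1.contDiffWithinAt) hs
    hx.injOn fun i _ => (dist_le_pi_dist x _ i).trans_lt hxa
  rw [hdivDiff]
  exact (hball ξ hξ).2

theorem confluent_vandermonde_limit_general (n : ℕ) (a : ℝ)
    (f : Fin n → ℝ → ℝ)
    (hf : ∀ j : Fin n, ContDiffAt ℝ ((n - 1 : ℕ) : ℕ∞) (f j) a) :
    Filter.Tendsto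
      (fun x : Fin n → ℝ =>
        Matrix.det (Matrix.of fun i j : Fin n => f j (x i)) /
          ∏ j : Fin n, ∏ i ∈ Finset.Iio j, (x j - x i))
      (nhdsWithin (fun _ => a) {x : Fin n → ℝ | Function.Injective x})
      (nhds (Matrix.det (Matrix.of fun i j : Fin n => iteratedDeriv (i : ℕ) (f j) a) /
        ∏ k ∈ Finset.range n, (Nat.factorial k : ℝ))) := by
  have hentries : ∀ i j : Fin n, Tendsto (fun x => divDiff (f j) (Iic i) x)
      (𝓝[{x | Function.Injective x}] fun _ => a)
      (𝓝 (iteratedDeriv i (f j) a / (i : ℕ).factorial)) := fun i j =>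
    tendsto_divDiff (Fin.card_Iic i) ((hf j).of_le (by exact_mod_cast Nat.le_sub_one_of_lt i.2))
  have hlimit :
      Matrix.det (Matrix.of fun i j : Fin n => iteratedDeriv i (f j) a / (i : ℕ).factorial) =
        Matrix.det (Matrix.of fun i j : Fin n => iteratedDeriv i (f j) a) /
          ∏ k ∈ range n, (k.factorial : ℝ) := by
    rw [div_eq_inv_mul, ← prod_inv_distrib, ← Fin.prod_univ_eq_prod_range, ← Matrix.det_mul_column]
    simp only [div_eq_inv_mul, Matrix.of_apply]
  simp_rw [det_div_prod_sub_eq_det_divDiff, ← hlimit]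
  exact (continuous_id.matrix_det.tendsto _).comp
    (tendsto_pi_nhds.2 fun i => tendsto_pi_nhds.2 (hentries i))

/-- Confluent limit of a determinant divided by the Vandermonde determinant: for `f_1,…,f_n`
`(n-1)`-times continuously differentiable near `a`, as `(x_1,…,x_n) → (a,…,a)` through
tuples with pairwise distinct entries,
`det(f_j(x_i))/∏_{i<j}(x_j-x_i) → det(f_j^{(i-1)}(a))/∏_{k=1}^{n-1} k!`. -/
theorem confluent_vandermonde_limit (n : ℕ) (hn : 1 ≤ n) (a : ℝ)
    (f : Fin n → ℝ → ℝ)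
    (hf : ∀ j : Fin n, ContDiffAt ℝ ((n - 1 : ℕ) : ℕ∞) (f j) a) :
    Filter.Tendsto
      (fun x : Fin n → ℝ =>
        Matrix.det (Matrix.of fun i j : Fin n => f j (x i)) /
          ∏ j : Fin n, ∏ i ∈ Finset.Iio j, (x j - x i))
      (nhdsWithin (fun _ => a) {x : Fin n → ℝ | Function.Injective x})
      (nhds (Matrix.det (Matrix.of fun i j : Fin n => iteratedDeriv (i : ℕ) (f j) a) /
        ∏ k ∈ Finset.range n, (Nat.factorial k : ℝ))) :=
  confluent_vandermonde_limit_general n a f hf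
end

section
/- Fix n ≥ 1, x ∈ ℝ, r > 0 and points y_1,…,y_n ∈ ℝ. Let P : ℝ×ℝ → ℝ, let F : ℝ → ℝ be continuous at x, and let φ_i : ℝ → ℝ for i ≥ 0 satisfy: P(x,y_j) ≠ 0 and F(x)·φ_0(y_j) = 1 for all j; Σ_{i≥0} r^i |φ_i(y_j)| < ∞ for all j; and P(x',y_j) = P(x,y_j) · F(x') · Σ_{i≥0} (x'-x)^i φ_i(y_j) for all x' with |x'-x| < r and all j. Then, as (x_1,…,x_n) tends to (x,…,x) through n-tuples of pairwise distinct points in (x-r, x+r), the ratio det( P(x_i,y_j) )_{i,j=1}^n / det( (x_j-x)^{i-1} )_{i,j=1}^n converges to F(x)^n · ∏_{j=1}^n P(x,y_j) · det( φ_{i-1}(y_j) )_{i,j=1}^n. -/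
/-!
Put `v i = ξ i - x`. By the expansion, `P (ξ i) (y j) = P x (y j) * F (ξ i) * G i j` with
`G i j = ∑ₖ v i ^ k * φ k (y j)`, so after pulling out the row and column factors it remains to
find the limit of `det G / det (vandermonde v)`. Replacing row `i` of `G` by the divided
difference over the nodes `v 0, …, v i` is a lower triangular operation of determinant
`1 / det (vandermonde v)`: it makes the Vandermonde matrix unitriangular, because a divided
difference over `d + 1` nodes sends `v ^ k` to `0` for `k < d` and `v ^ d` to `1`. For `k > d` it
is at most `2 ^ k * ρ ^ (k - d)` when the nodes lie in `[-ρ, ρ]`, so the `d`-th divided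
difference of column `j` of `G` is `φ d (y j) + O(ρ)`.
-/

open Finset Matrix Polynomial Filter Topology

section DividedDifference

variable {K ι : Type*} [Field K] [DecidableEq ι]

noncomputable def dividedDiff (v : ι → K) (s : Finset ι) (f : ι → K) : K :=
  ∑ i ∈ s, f i / ∏ j ∈ s.erase i, (v i - v j)

@[simp]
lemma dividedDiff_empty (v f : ι → K) : dividedDiff v ∅ f = 0 := by
  simp [dividedDiff]

lemma dividedDiff_pow_of_lt {v : ι → K} {s : Finset ι} (hv : Set.InjOn v s) {k : ℕ}
    (hk : k < #s) : dividedDiff v s (fun i => v i ^ k) = if k = #s - 1 then 1 else 0 := by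
  have h := Lagrange.coeff_eq_sum hv (P := X ^ k) (by rw [degree_X_pow]; exact_mod_cast hk)
  simp only [coeff_X_pow, eval_pow, eval_X] at h
  rw [dividedDiff, ← h]
  exact if_congr eq_comm rfl rfl

lemma dividedDiff_insert_sub_mul {v : ι → K} {s : Finset ι} {a : ι} (ha : a ∉ s)
    (hv : Set.InjOn v ↑(insert a s)) (f : ι → K) :
    dividedDiff v (insert a s) (fun i => (v i - v a) * f i) = dividedDiff v s f := by
  rw [dividedDiff, sum_insert ha, sub_self, zero_mul, zero_div, zero_add]
  refine sum_congr rfl fun i hi => ?_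
  have hia : i ≠ a := ne_of_mem_of_not_mem hi ha
  have hvia : v i - v a ≠ 0 :=
    sub_ne_zero.2 fun h => hia (hv (by simp [hi]) (by simp) h)
  rw [erase_insert_of_ne hia.symm, prod_insert fun h => ha (mem_of_mem_erase h),
    mul_div_mul_left _ _ hvia]

lemma dividedDiff_insert_pow_succ {v : ι → K} {s : Finset ι} {a : ι} (ha : a ∉ s)
    (hv : Set.InjOn v ↑(insert a s)) (k : ℕ) :
    dividedDiff v (insert a s) (fun i => v i ^ (k + 1)) =
      v a * dividedDiff v (insert a s) (fun i => v i ^ k) +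
        dividedDiff v s (fun i => v i ^ k) := by
  rw [← dividedDiff_insert_sub_mul ha hv, dividedDiff, dividedDiff, dividedDiff, mul_sum,
    ← sum_add_distrib]
  exact sum_congr rfl fun i _ => by ring

lemma abs_dividedDiff_pow_le [LinearOrder K] [IsStrictOrderedRing K] {v : ι → K} {ρ : K}
    {s : Finset ι} {k : ℕ} (hv : Set.InjOn v s) (hρ : 0 ≤ ρ)
    (hvρ : ∀ i ∈ s, |v i| ≤ ρ) (hs : #s ≤ k + 1) :
    |dividedDiff v s (fun i => v i ^ k)| ≤ 2 ^ k * ρ ^ (k + 1 - #s) := by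
  have hcard_eq : ∀ {s : Finset ι} {k : ℕ}, Set.InjOn v s → #s = k + 1 →
      |dividedDiff v s (fun i => v i ^ k)| ≤ 2 ^ k * ρ ^ (k + 1 - #s) := fun hv hs => by
    rw [dividedDiff_pow_of_lt hv (by omega), if_pos (by omega), hs, Nat.sub_self, pow_zero,
      mul_one, abs_one]
    exact one_le_pow₀ one_le_two
  induction k generalizing s with
  | zero =>
    rcases Nat.le_one_iff_eq_zero_or_eq_one.1 hs with hs | hs
    · simp [card_eq_zero.1 hs]; positivity
    · exact hcard_eq hv hs
  | succ k ih =>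
    rcases hs.eq_or_lt with hs | hs
    · exact hcard_eq hv hs
    induction s using Finset.cons_induction with
    | empty => simp; positivity
    | cons a s ha _ =>
      rw [cons_eq_insert] at hv hvρ hs ⊢
      have h₁ := ih hv hvρ (by omega)
      rw [card_insert_of_notMem ha] at hs h₁ ⊢
      have h₂ := ih (hv.mono (by simp)) (fun i hi => hvρ i (mem_insert_of_mem hi)) (by omega)
      rw [dividedDiff_insert_pow_succ ha hv]
      calc _ ≤ |v a| * |dividedDiff v (insert a s) (fun i => v i ^ k)| +
            |dividedDiff v s (fun i => v i ^ k)| := by rw [← abs_mul]; exact abs_add_le _ _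
        _ ≤ ρ * (2 ^ k * ρ ^ (k + 1 - (#s + 1))) + 2 ^ k * ρ ^ (k + 1 - #s) := by
          gcongr
          exact hvρ a (mem_insert_self a s)
        _ = 2 ^ (k + 1) * ρ ^ (k + 1 + 1 - (#s + 1)) := by
          rw [show k + 1 + 1 - (#s + 1) = k + 1 - (#s + 1) + 1 by omega,
            show k + 1 - #s = k + 1 - (#s + 1) + 1 by omega]
          ring

end DividedDifference

section DividedDifferenceMatrix

variable {K : Type*} [Field K] {n : ℕ}

/-- Left multiplication by `dividedDiffMatrix v` replaces row `i` by the divided difference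
of rows `0, …, i` at the nodes `v 0, …, v i`. -/
noncomputable def dividedDiffMatrix (v : Fin n → K) : Matrix (Fin n) (Fin n) K :=
  of fun i m => if m ≤ i then (∏ l ∈ (Iic i).erase m, (v m - v l))⁻¹ else 0

lemma dividedDiffMatrix_mul_apply (v : Fin n → K) (A : Matrix (Fin n) (Fin n) K)
    (i j : Fin n) :
    (dividedDiffMatrix v * A) i j = dividedDiff v (Iic i) (fun m => A m j) := by
  simp only [mul_apply, dividedDiffMatrix, of_apply, ite_mul, zero_mul, dividedDiff]
  rw [← sum_filter]
  exact sum_congr (by ext; simp) fun m _ => by rw [div_eq_inv_mul]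

lemma det_dividedDiffMatrix_mul_det_vandermonde {v : Fin n → K} (hv : Function.Injective v) :
    (dividedDiffMatrix v).det * (vandermonde v).det = 1 := by
  rw [← det_mul, det_of_isUpperTriangular]
  · refine prod_eq_one fun i _ => ?_
    rw [dividedDiffMatrix_mul_apply]
    simp only [vandermonde_apply]
    rw [dividedDiff_pow_of_lt hv.injOn (by simp [Fin.card_Iic]),
      if_pos (by simp [Fin.card_Iic])]
  · intro i k (hki : k < i)
    rw [dividedDiffMatrix_mul_apply]
    simp only [vandermonde_apply]
    rw [dividedDiff_pow_of_lt hv.injOn (by simp [Fin.card_Iic]; omega),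
      if_neg (by simp [Fin.card_Iic]; omega)]

lemma det_div_det_vandermonde {v : Fin n → K} (hv : Function.Injective v)
    (A : Matrix (Fin n) (Fin n) K) :
    A.det / (vandermonde v).det = (dividedDiffMatrix v * A).det := by
  have h := det_dividedDiffMatrix_mul_det_vandermonde hv
  rw [det_mul, div_eq_iff (right_ne_zero_of_mul_eq_one h)]
  linear_combination -A.det * h

end DividedDifferenceMatrix

section PowerSeries

variable {ι : Type*} [DecidableEq ι] {v : ι → ℝ} {s : Finset ι} {r ρ : ℝ} {d : ℕ}

lemma hasSum_dividedDiff {f : ℕ → ι → ℝ} {g : ι → ℝ}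
    (hf : ∀ i ∈ s, HasSum (fun k => f k i) (g i)) :
    HasSum (fun k => dividedDiff v s (f k)) (dividedDiff v s g) :=
  hasSum_sum fun i hi => (hf i hi).div_const _

lemma abs_dividedDiff_pow_sub_ite_le (hr : 0 < r) (hs : #s = d + 1) (hv : Set.InjOn v s)
    (hρ : 0 ≤ ρ) (hρr : ρ ≤ r / 2) (hvρ : ∀ i ∈ s, |v i| ≤ ρ) (k : ℕ) :
    |dividedDiff v s (fun i => v i ^ k) - if k = d then 1 else 0| ≤
      ρ * (2 / r) ^ (d + 1) * r ^ k := by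
  rcases lt_or_ge k (d + 1) with hk | hk
  · rw [dividedDiff_pow_of_lt hv (hs ▸ hk), hs, Nat.add_sub_cancel, sub_self, abs_zero]
    positivity
  obtain ⟨j, rfl⟩ := Nat.exists_eq_add_of_le hk
  rw [if_neg (by omega), sub_zero]
  calc _ ≤ 2 ^ (d + 1 + j) * ρ ^ (j + 1) := by
        simpa [hs, show d + 1 + j + 1 - (d + 1) = j + 1 by omega] using
          abs_dividedDiff_pow_le (k := d + 1 + j) hv hρ hvρ (by omega)
    _ ≤ 2 ^ (d + 1 + j) * ((r / 2) ^ j * ρ) := by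
        rw [pow_succ]; gcongr
    _ = ρ * (2 / r) ^ (d + 1) * r ^ (d + 1 + j) := by
        rw [div_pow, div_pow, pow_add (2 : ℝ)]
        field_simp
        ring

lemma abs_dividedDiff_powerSeries_sub_le {ψ : ℕ → ℝ} (hψ : Summable fun k => r ^ k * |ψ k|)
    (hr : 0 < r) (hs : #s = d + 1) (hv : Set.InjOn v s) (hρ : 0 ≤ ρ) (hρr : ρ ≤ r / 2)
    (hvρ : ∀ i ∈ s, |v i| ≤ ρ) :
    |dividedDiff v s (fun i => ∑' k, v i ^ k * ψ k) - ψ d| ≤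
      ρ * (2 / r) ^ (d + 1) * ∑' k, r ^ k * |ψ k| := by
  have hseries : ∀ i ∈ s, HasSum (fun k => v i ^ k * ψ k) (∑' k, v i ^ k * ψ k) := by
    refine fun i hi => (hψ.of_norm_bounded fun k => ?_).hasSum
    rw [Real.norm_eq_abs, abs_mul, abs_pow]
    gcongr
    linarith [hvρ i hi]
  have hdiff := (hasSum_dividedDiff (v := v) hseries).sub (hasSum_ite_eq d (ψ d))
  rw [← tsum_mul_left]
  refine hdiff.norm_le_of_bounded (hψ.mul_left _).hasSum fun k => ?_
  have hterm : dividedDiff v s (fun i => v i ^ k * ψ k) - (if k = d then ψ d else 0) =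
      (dividedDiff v s (fun i => v i ^ k) - if k = d then 1 else 0) * ψ k := by
    split_ifs with hk
    · subst hk; simp [dividedDiff, sub_mul, sum_mul, div_mul_eq_mul_div]
    · simp [dividedDiff, sum_mul, div_mul_eq_mul_div]
  rw [hterm, Real.norm_eq_abs, abs_mul, ← mul_assoc]
  gcongr
  exact abs_dividedDiff_pow_sub_ite_le hr hs hv hρ hρr hvρ k

end PowerSeries

section Limits

lemma tendsto_dividedDiff_powerSeries {ι : Type*} [Fintype ι] [DecidableEq ι] {s : Finset ι}
    {d : ℕ} {r : ℝ} {ψ : ℕ → ℝ} (hψ : Summable fun k => r ^ k * |ψ k|) (hr : 0 < r)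
    (hs : #s = d + 1) :
    Tendsto (fun v : ι → ℝ => dividedDiff v s (fun i => ∑' k, v i ^ k * ψ k))
      (𝓝[{v | Set.InjOn v s}] 0) (𝓝 (ψ d)) := by
  have hnorm : Tendsto (fun v : ι → ℝ => ‖v‖) (𝓝[{v | Set.InjOn v s}] 0) (𝓝 0) :=
    tendsto_norm_zero.mono_left nhdsWithin_le_nhds
  refine tendsto_iff_norm_sub_tendsto_zero.2 (squeeze_zero_norm' ?_
    (by simpa using hnorm.mul_const ((2 / r) ^ (d + 1) * ∑' k, r ^ k * |ψ k|)))
  filter_upwards [self_mem_nhdsWithin, hnorm.eventually (eventually_le_nhds (half_pos hr))]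
    with v hv hvr
  rw [norm_norm, Real.norm_eq_abs, ← mul_assoc]
  exact abs_dividedDiff_powerSeries_sub_le hψ hr hs hv (norm_nonneg v) hvr
    fun i _ => (Real.norm_eq_abs (v i)).symm.trans_le (norm_le_pi_norm v i)

lemma tendsto_dividedDiffMatrix_mul_powerSeries {n : ℕ} {r : ℝ} {ψ : ℕ → Fin n → ℝ}
    (hψ : ∀ j, Summable fun k => r ^ k * |ψ k j|) (hr : 0 < r) :
    Tendsto (fun v : Fin n → ℝ => dividedDiffMatrix v * of fun i j => ∑' k, v i ^ k * ψ k j)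
      (𝓝[{v | Function.Injective v}] 0) (𝓝 (of fun i j => ψ i j)) := by
  refine tendsto_pi_nhds.2 fun i => tendsto_pi_nhds.2 fun j => ?_
  simp only [dividedDiffMatrix_mul_apply, of_apply]
  exact (tendsto_dividedDiff_powerSeries (hψ j) hr (Fin.card_Iic i)).mono_left
    (nhdsWithin_mono _ fun v hv => hv.injOn)

lemma tendsto_det_powerSeries_div_det_vandermonde {n : ℕ} {r : ℝ} {ψ : ℕ → Fin n → ℝ}
    (hψ : ∀ j, Summable fun k => r ^ k * |ψ k j|) (hr : 0 < r) (x : ℝ) :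
    Tendsto (fun ξ : Fin n → ℝ => (of fun i j => ∑' k, (ξ i - x) ^ k * ψ k j).det /
        (vandermonde fun i => ξ i - x).det)
      (𝓝[{ξ | Function.Injective ξ}] fun _ => x) (𝓝 (of fun i j : Fin n => ψ i j).det) := by
  have hshift : Tendsto (fun ξ : Fin n → ℝ => ξ - fun _ => x)
      (𝓝[{ξ | Function.Injective ξ}] fun _ => x) (𝓝[{v | Function.Injective v}] 0) :=
    tendsto_nhdsWithin_iff.2
      ⟨((continuous_id.sub continuous_const).tendsto' _ _ (sub_self _)).mono_left
          nhdsWithin_le_nhds,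
        eventually_nhdsWithin_of_forall fun ξ hξ => sub_left_injective.comp hξ⟩
  refine ((continuous_id.matrix_det.tendsto _).comp
    ((tendsto_dividedDiffMatrix_mul_powerSeries hψ hr).comp hshift)).congr' ?_
  filter_upwards [self_mem_nhdsWithin] with ξ hξ
  exact (det_div_det_vandermonde (v := ξ - fun _ => x) (sub_left_injective.comp hξ) _).symm

end Limits

theorem entrance_law_biorthogonal_limit_general (n : ℕ)
    (x r : ℝ) (hr : 0 < r) (y : Fin n → ℝ)
    (P : ℝ → ℝ → ℝ) (F : ℝ → ℝ) (φ : ℕ → ℝ → ℝ)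
    (hF : ContinuousAt F x)
    (hsum : ∀ j : Fin n, Summable fun i : ℕ => r ^ i * |φ i (y j)|)
    (hexp : ∀ x' : ℝ, |x' - x| < r → ∀ j : Fin n,
      P x' (y j) = P x (y j) * F x' * ∑' i : ℕ, (x' - x) ^ i * φ i (y j)) :
    Filter.Tendsto
      (fun ξ : Fin n → ℝ =>
        Matrix.det (Matrix.of fun i j : Fin n => P (ξ i) (y j)) /
          Matrix.det (Matrix.of fun i j : Fin n => (ξ j - x) ^ (i : ℕ)))
      (nhdsWithin (fun _ => x)
        {ξ : Fin n → ℝ | Function.Injective ξ ∧ ∀ i : Fin n, ξ i ∈ Set.Ioo (x - r) (x + r)})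
      (nhds ((F x) ^ n * (∏ j : Fin n, P x (y j)) *
        Matrix.det (Matrix.of fun i j : Fin n => φ (i : ℕ) (y j)))) := by
  set S := {ξ : Fin n → ℝ | Function.Injective ξ ∧ ∀ i : Fin n, ξ i ∈ Set.Ioo (x - r) (x + r)}
  have hFprod : Tendsto (fun ξ : Fin n → ℝ => ∏ i, F (ξ i)) (𝓝[S] fun _ => x)
      (𝓝 (F x ^ n)) := by
    simpa using tendsto_finsetProd (univ : Finset (Fin n)) fun i _ =>
      hF.tendsto.comp ((continuous_apply i).tendsto _ |>.mono_left nhdsWithin_le_nhds)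
  have hquot := (tendsto_det_powerSeries_div_det_vandermonde hsum hr x).mono_left
    (nhdsWithin_mono _ fun ξ (hξ : ξ ∈ S) => hξ.1)
  rw [mul_comm (F x ^ n), mul_assoc]
  refine ((hFprod.mul hquot).const_mul (∏ j, P x (y j))).congr' ?_
  filter_upwards [self_mem_nhdsWithin] with ξ ⟨_, hξ⟩
  have hdet : (of fun i j => P (ξ i) (y j)).det =
      (∏ j, P x (y j)) *
        ((∏ i, F (ξ i)) * (of fun i j => ∑' k, (ξ i - x) ^ k * φ k (y j)).det) := by
    rw [← det_mul_column, ← det_mul_row]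
    congr 1
    ext i j
    rw [of_apply, of_apply, of_apply, of_apply,
      hexp _ (abs_sub_lt_iff.2 ⟨by linarith [(hξ i).2], by linarith [(hξ i).1]⟩), mul_assoc]
  rw [hdet, mul_div_assoc, mul_div_assoc, ← det_transpose (vandermonde _)]
  rfl

/-- Entrance laws as biorthogonal ensembles: if `P(x',y_j) = P(x,y_j) F(x') Σ_i (x'-x)^i φ_i(y_j)`
with the stated normalization and summability, then as `(x_1,…,x_n) → (x,…,x)` through tuples
of pairwise distinct points of `(x-r,x+r)`,
`det(P(x_i,y_j))/det((x_j-x)^{i-1}) → F(x)^n · ∏_j P(x,y_j) · det(φ_{i-1}(y_j))`. -/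
theorem entrance_law_biorthogonal_limit (n : ℕ) (hn : 1 ≤ n)
    (x r : ℝ) (hr : 0 < r) (y : Fin n → ℝ)
    (P : ℝ → ℝ → ℝ) (F : ℝ → ℝ) (φ : ℕ → ℝ → ℝ)
    (hF : ContinuousAt F x)
    (hP0 : ∀ j : Fin n, P x (y j) ≠ 0)
    (hnorm : ∀ j : Fin n, F x * φ 0 (y j) = 1)
    (hsum : ∀ j : Fin n, Summable fun i : ℕ => r ^ i * |φ i (y j)|)
    (hexp : ∀ x' : ℝ, |x' - x| < r → ∀ j : Fin n,
      P x' (y j) = P x (y j) * F x' * ∑' i : ℕ, (x' - x) ^ i * φ i (y j)) :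
    Filter.Tendsto
      (fun ξ : Fin n → ℝ =>
        Matrix.det (Matrix.of fun i j : Fin n => P (ξ i) (y j)) /
          Matrix.det (Matrix.of fun i j : Fin n => (ξ j - x) ^ (i : ℕ)))
      (nhdsWithin (fun _ => x)
        {ξ : Fin n → ℝ | Function.Injective ξ ∧ ∀ i : Fin n, ξ i ∈ Set.Ioo (x - r) (x + r)})
      (nhds ((F x) ^ n * (∏ j : Fin n, P x (y j)) *
        Matrix.det (Matrix.of fun i j : Fin n => φ (i : ℕ) (y j)))) :=
  entrance_law_biorthogonal_limit_general n x r hr y P F φ hF hsum hexp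
end
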